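/- arXiv:1109.1806 — 4 statements merged into one kernel-verified Lean document; each statement's English description precedes it below -/
import Mathlib

section
/- Let S₁ = {(a,0) : a ≥ 1} ∪ {(0,a) : a ≥ 1} ∪ {(1,1)} (all rook steps together with the bishop step of length 1), let p_n be the number of Catalan S₁-paths from (0,0) to (n,n), and let P₁(t) = Σ_{n≥0} p_n tⁿ ∈ ℚ⟦t⟧. Then in ℚ⟦t⟧: ((1 + 2t − t²) − 2t(t−2)²·P₁(t))² = (t−1)(−1 + 11t − 7t² + t³). -/
/-- x-coordinate of the `j`-th node of the path `p` (partial sum of first coordinates). -/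
def xPart (p : List (ℕ × ℕ)) (j : ℕ) : ℕ := ((p.take j).map Prod.fst).sum

/-- y-coordinate of the `j`-th node of the path `p` (partial sum of second coordinates). -/
def yPart (p : List (ℕ × ℕ)) (j : ℕ) : ℕ := ((p.take j).map Prod.snd).sum

/-- `p` is an `S`-path from `(0,0)` to `(n,m)`. -/
def IsPath (S : Set (ℕ × ℕ)) (n m : ℕ) (p : List (ℕ × ℕ)) : Prop :=
  (∀ st ∈ p, st ∈ S) ∧ xPart p p.length = n ∧ yPart p p.length = m

/-- `p` is Catalan: every node `(x, y)` satisfies `x ≤ y`. -/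
def IsCatalan (p : List (ℕ × ℕ)) : Prop :=
  ∀ j ≤ p.length, xPart p j ≤ yPart p j

/-- The number of `S`-paths from `(0,0)` to `(n,m)`. -/
noncomputable def aCount (S : Set (ℕ × ℕ)) (n m : ℕ) : ℕ :=
  Set.ncard {p : List (ℕ × ℕ) | IsPath S n m p}

/-- The number of Catalan `S`-paths from `(0,0)` to `(n,n)`. -/
noncomputable def pCatalan (S : Set (ℕ × ℕ)) (n : ℕ) : ℕ :=
  Set.ncard {p : List (ℕ × ℕ) | IsPath S n n p ∧ IsCatalan p}

/-- All rook steps together with the bishop step of length 1. -/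
def S1 : Set (ℕ × ℕ) :=
  {st | (∃ a : ℕ, 1 ≤ a ∧ st = (a, 0)) ∨ (∃ a : ℕ, 1 ≤ a ∧ st = (0, a)) ∨ st = (1, 1)}


/-!
Let `c x y` count the Catalan `S1`-paths to `(x, y)` and put `F h = ∑ₓ c x (x + h) Xˣ`.
Splitting off the last step (diagonal, horizontal or vertical) gives the linear recurrence
`X (2 - X) F (h + 2) = A F (h + 1) - (2 - X) F h + [h = 0]`, with `A = 1 + 2X - X²`.
Let `W` be the square root of `A² - 4X(2 - X)²` with constant term `1`, the right-hand side of
the theorem. Then `D h = 2X(2 - X) F (h + 1) - (A - W) F h` satisfies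
`(A + W) D h = 2X(2 - X) D (h + 1)` for `h ≥ 1`; since `A + W` is a unit, every power of `X`
divides `D 1`, so `D 1 = 0` (the kernel method). Together with the first two recurrences this
forces `A - 2X(2 - X)² F 0 = W`, and `F 0 = P₁`.
-/

open Finset PowerSeries

namespace PowerSeries

lemma exists_sq_eq_and_constantCoeff_eq_one {A : Type*} [CommRing A] [Algebra ℚ A]
    {f : A⟦X⟧} (hf : constantCoeff f = 1) : ∃ g : A⟦X⟧, g ^ 2 = f ∧ constantCoeff g = 1 := by
  have ha : HasSubst (f - 1) := HasSubst.of_constantCoeff_zero' (by simp [hf])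
  set B := binomialSeries A (1 / 2 : ℚ)
  refine ⟨B.subst (f - 1), ?_, ?_⟩
  · rw [← subst_pow ha, sq, ← binomialSeries_add, add_halves,
      show binomialSeries A (1 : ℚ) = 1 + X by
        simpa using binomialSeries_nat (R := ℚ) (A := A) 1,
      subst_add ha, subst_X ha, ← map_one (C (R := A)), subst_C]
    simp
  · have h := constantCoeff_subst_eq_zero (S := A) (by simp [hf] : constantCoeff (f - 1) = 0)
      (B - 1) (by simp [B])
    rw [subst_sub ha, ← map_one (C (R := A)), subst_C] at h
    simp only [map_sub, map_one, sub_eq_zero] at h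
    exact h

lemma eq_zero_of_forall_X_pow_dvd {R : Type*} [Semiring R] {f : R⟦X⟧}
    (h : ∀ n, X ^ n ∣ f) : f = 0 :=
  ext fun n => by simpa using X_pow_dvd_iff.mp (h (n + 1)) n n.lt_succ_self

lemma eq_zero_of_isUnit_mul_eq_X_mul_succ {R : Type*} [CommSemiring R] {a b : R⟦X⟧}
    (hb : IsUnit b) {D : ℕ → R⟦X⟧} (hD : ∀ h, b * D h = X * a * D (h + 1)) (h : ℕ) :
    D h = 0 := by
  have hdvd : ∀ n h, X ^ n ∣ D h := by
    intro n
    induction n with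
    | zero => simp
    | succ n ih =>
      intro h
      rw [← hb.dvd_mul_left, hD, pow_succ', mul_assoc]
      exact mul_dvd_mul_left X (dvd_mul_of_dvd_right (ih (h + 1)) a)
  exact eq_zero_of_forall_X_pow_dvd fun n => hdvd n h

end PowerSeries

section Paths

variable {S : Set (ℕ × ℕ)} {x y : ℕ} {p q : List (ℕ × ℕ)} {st : ℕ × ℕ}

lemma xPart_length (p : List (ℕ × ℕ)) : xPart p p.length = (p.map Prod.fst).sum := by
  simp [xPart]

lemma yPart_length (p : List (ℕ × ℕ)) : yPart p p.length = (p.map Prod.snd).sum := by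
  simp [yPart]

lemma xPart_append_of_le {j : ℕ} (r : List (ℕ × ℕ)) (hj : j ≤ q.length) :
    xPart (q ++ r) j = xPart q j := by
  rw [xPart, List.take_append_of_le_length hj, xPart]

lemma yPart_append_of_le {j : ℕ} (r : List (ℕ × ℕ)) (hj : j ≤ q.length) :
    yPart (q ++ r) j = yPart q j := by
  rw [yPart, List.take_append_of_le_length hj, yPart]

lemma isPath_append_singleton_iff :
    IsPath S x y (q ++ [st]) ↔ st ∈ S ∧ st ≤ (x, y) ∧ IsPath S (x - st.1) (y - st.2) q := by
  simp only [IsPath, xPart_length, yPart_length, List.mem_append, List.mem_singleton,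
    List.map_append, List.sum_append, List.map_cons, List.map_nil, List.sum_cons, List.sum_nil,
    Prod.le_def]
  constructor
  · rintro ⟨hS, hx, hy⟩
    exact ⟨hS st (Or.inr rfl), ⟨by omega, by omega⟩, fun a ha => hS a (Or.inl ha), by omega,
      by omega⟩
  · rintro ⟨hst, ⟨hx, hy⟩, hS, hqx, hqy⟩
    exact ⟨fun a ha => ha.elim (hS a) (· ▸ hst), by omega, by omega⟩

lemma isCatalan_append_singleton_iff :
    IsCatalan (q ++ [st]) ↔
      IsCatalan q ∧ (q.map Prod.fst).sum + st.1 ≤ (q.map Prod.snd).sum + st.2 := by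
  have hlen : (q ++ [st]).length = q.length + 1 := by simp
  have hfinal : xPart (q ++ [st]) (q.length + 1) = (q.map Prod.fst).sum + st.1 ∧
      yPart (q ++ [st]) (q.length + 1) = (q.map Prod.snd).sum + st.2 := by
    rw [← hlen, xPart_length, yPart_length]; simp
  simp only [IsCatalan, hlen]
  constructor
  · intro h
    refine ⟨fun j hj => ?_, hfinal.1 ▸ hfinal.2 ▸ h _ le_rfl⟩
    simpa only [xPart_append_of_le _ hj, yPart_append_of_le _ hj] using h j (by omega)
  · rintro ⟨hq, hlast⟩ j hj
    rcases Nat.lt_or_ge j (q.length + 1) with hj' | hj'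
    · rw [xPart_append_of_le _ (by omega), yPart_append_of_le _ (by omega)]
      exact hq j (by omega)
    · rw [le_antisymm hj hj', hfinal.1, hfinal.2]
      exact hlast

lemma IsPath.length_le (h0 : (0, 0) ∉ S) (hp : IsPath S x y p) : p.length ≤ x + y := by
  obtain ⟨hS, hx, hy⟩ := hp
  rw [xPart_length] at hx
  rw [yPart_length] at hy
  have hsum : (p.map fun st => st.1 + st.2).sum = x + y := by
    rw [← hx, ← hy, ← List.sum_map_add]
  have hpos : ∀ i ∈ p.map fun st => st.1 + st.2, 1 ≤ i := by
    simp only [List.mem_map]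
    rintro _ ⟨st, hst, rfl⟩
    have hne : st ≠ (0, 0) := fun h => h0 (h ▸ hS st hst)
    simp only [Ne, Prod.ext_iff] at hne
    omega
  simpa [hsum] using List.length_le_sum_of_one_le _ hpos

lemma IsPath.mem_Iic (hp : IsPath S x y p) (hst : st ∈ p) : st ∈ Set.Iic (x, y) := by
  obtain ⟨-, hx, hy⟩ := hp
  rw [xPart_length] at hx
  rw [yPart_length] at hy
  exact ⟨hx ▸ List.le_sum_of_mem (List.mem_map_of_mem hst),
    hy ▸ List.le_sum_of_mem (List.mem_map_of_mem hst)⟩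

lemma finite_setOf_isPath (h0 : (0, 0) ∉ S) (x y : ℕ) : {p | IsPath S x y p}.Finite := by
  refine ((List.finite_length_le (Set.Iic (x, y)) (x + y)).image
    (List.map Subtype.val)).subset fun p hp => ?_
  lift p to List (Set.Iic (x, y)) using fun st hst => IsPath.mem_Iic hp hst
  exact ⟨p, by simpa using IsPath.length_le h0 hp, rfl⟩

end Paths

section LastStep

variable {S : Set (ℕ × ℕ)} {x y : ℕ}

def catalanPaths (S : Set (ℕ × ℕ)) (x y : ℕ) : Set (List (ℕ × ℕ)) :=
  {p | IsPath S x y p ∧ IsCatalan p}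

noncomputable def catalanCount (S : Set (ℕ × ℕ)) (x y : ℕ) : ℕ :=
  (catalanPaths S x y).ncard

lemma catalanCount_zero_zero (h0 : (0, 0) ∉ S) : catalanCount S 0 0 = 1 := by
  rw [catalanCount, Set.ncard_eq_one]
  refine ⟨[], Set.eq_singleton_iff_unique_mem.mpr ⟨?_, fun p hp => ?_⟩⟩
  · exact ⟨⟨by simp, rfl, rfl⟩, fun j hj => by simp [xPart, yPart]⟩
  · simpa using hp.1.length_le h0

lemma catalanPaths_eq_biUnion (hxy : x ≤ y) (hne : (x, y) ≠ (0, 0)) {T : Finset (ℕ × ℕ)}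
    (hT : ∀ u, u ∈ T ↔ u ≤ (x, y) ∧ u.1 ≤ u.2 ∧ (x - u.1, y - u.2) ∈ S) :
    catalanPaths S x y =
      ⋃ u ∈ (T : Set (ℕ × ℕ)), (· ++ [(x - u.1, y - u.2)]) '' catalanPaths S u.1 u.2 := by
  ext p
  simp only [catalanPaths, Set.mem_ofPred_eq, Set.mem_iUnion, Set.mem_image, Finset.mem_coe, hT]
  constructor
  · rintro ⟨hp, hcat⟩
    obtain rfl | ⟨q, st, rfl⟩ := p.eq_nil_or_concat
    · exact absurd (by rw [← hp.2.1, ← hp.2.2]; rfl) hne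
    rw [List.concat_eq_append] at hp hcat ⊢
    obtain ⟨hst, hle, hq⟩ := isPath_append_singleton_iff.mp hp
    have hqcat := (isCatalan_append_singleton_iff.mp hcat).1
    have hu : x - st.1 ≤ y - st.2 := by
      simpa only [hq.2.1, hq.2.2] using hqcat q.length le_rfl
    obtain ⟨h1, h2⟩ := Prod.le_def.mp hle
    refine ⟨(x - st.1, y - st.2), ⟨Prod.le_def.mpr ⟨by simp, by simp⟩, hu, ?_⟩, q,
      ⟨hq, hqcat⟩, ?_⟩
    · rwa [Nat.sub_sub_self h1, Nat.sub_sub_self h2]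
    · rw [Nat.sub_sub_self h1, Nat.sub_sub_self h2]
  · rintro ⟨u, ⟨hu, hu12, hstep⟩, q, ⟨hq, hqcat⟩, rfl⟩
    obtain ⟨h1, h2⟩ := Prod.le_def.mp hu
    refine ⟨isPath_append_singleton_iff.mpr ⟨hstep, Prod.le_def.mpr ⟨by simp, by simp⟩, ?_⟩,
      isCatalan_append_singleton_iff.mpr ⟨hqcat, ?_⟩⟩
    · rwa [Nat.sub_sub_self h1, Nat.sub_sub_self h2]
    · rw [← xPart_length, ← yPart_length, hq.2.1, hq.2.2]
      omega

lemma catalanCount_eq_sum (h0 : (0, 0) ∉ S) (hxy : x ≤ y) (hne : (x, y) ≠ (0, 0))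
    {T : Finset (ℕ × ℕ)} (hT : ∀ u, u ∈ T ↔ u ≤ (x, y) ∧ u.1 ≤ u.2 ∧ (x - u.1, y - u.2) ∈ S) :
    catalanCount S x y = ∑ u ∈ T, catalanCount S u.1 u.2 := by
  have hfin : ∀ u : ℕ × ℕ, (catalanPaths S u.1 u.2).Finite := fun u =>
    (finite_setOf_isPath h0 u.1 u.2).subset fun p hp => hp.1
  have hdisj : (T : Set (ℕ × ℕ)).PairwiseDisjoint
      fun u => (· ++ [(x - u.1, y - u.2)]) '' catalanPaths S u.1 u.2 := by
    intro u hu v hv huv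
    refine Set.disjoint_left.mpr ?_
    rintro _ ⟨q, -, rfl⟩ ⟨r, -, hqr⟩
    obtain ⟨hu1, hu2⟩ := Prod.le_def.mp ((hT u).mp hu).1
    obtain ⟨hv1, hv2⟩ := Prod.le_def.mp ((hT v).mp hv).1
    have hlast := congrArg List.getLast? hqr
    simp only [List.getLast?_append, List.getLast?_singleton, Option.some_or,
      Option.some.injEq, Prod.mk.injEq] at hlast
    exact huv (Prod.ext (by omega) (by omega))
  rw [catalanCount, catalanPaths_eq_biUnion hxy hne hT,
    T.finite_toSet.ncard_biUnion (fun u _ => (hfin u).image _) hdisj, finsum_mem_coe_finset]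
  exact Finset.sum_congr rfl fun u _ =>
    Set.ncard_image_of_injective _ (List.append_left_injective _)

end LastStep

section RookBishop

variable {x y : ℕ}

lemma zero_notMem_S1 : ((0, 0) : ℕ × ℕ) ∉ S1 := by
  simp [S1]

lemma catalanCount_S1 (hxy : x ≤ y) (hy : 0 < y) :
    catalanCount S1 x y = (if 1 ≤ x then catalanCount S1 (x - 1) (y - 1) else 0) +
      ∑ j ∈ range x, catalanCount S1 j y + ∑ j ∈ Ico x y, catalanCount S1 x j := by
  have hT : ∀ u, u ∈ ((range x).image fun j => (j, y)) ∪ ((Ico x y).image fun j => (x, j)) ∪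
      (if 1 ≤ x then {(x - 1, y - 1)} else ∅) ↔
      u ≤ (x, y) ∧ u.1 ≤ u.2 ∧ (x - u.1, y - u.2) ∈ S1 := by
    rintro ⟨a, b⟩
    split_ifs <;> simp [S1, Prod.le_def] <;> omega
  rw [catalanCount_eq_sum zero_notMem_S1 hxy (by simp; omega) hT]
  have hdisj₁ :
      Disjoint ((range x).image fun j => (j, y)) ((Ico x y).image fun j => (x, j)) := by
    simp only [disjoint_left, mem_image, mem_range, mem_Ico]
    rintro _ ⟨j, hj, rfl⟩ ⟨k, -, hk⟩
    simp only [Prod.mk.injEq] at hk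
    omega
  have hdisj₂ :
      Disjoint (((range x).image fun j => (j, y)) ∪ ((Ico x y).image fun j => (x, j)))
        (if 1 ≤ x then {(x - 1, y - 1)} else ∅) := by
    split_ifs
    · simp only [disjoint_singleton_right, mem_union, mem_image, mem_range, mem_Ico,
        Prod.mk.injEq, not_or, not_exists, not_and]
      constructor <;> intros <;> omega
    · exact disjoint_empty_right _
  rw [sum_union hdisj₂, sum_union hdisj₁, sum_image (by simp), sum_image (by simp)]
  split_ifs <;> simp only [sum_singleton, sum_empty] <;> ring

end RookBishop

section GeneratingFunctions

noncomputable def heightSeries (h : ℕ) : ℚ⟦X⟧ :=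
  mk fun x => (catalanCount S1 x (x + h) : ℚ)

/-- Catalan `S1`-paths to `(x, x + h)` whose last step is horizontal. -/
noncomputable def horizontalSeries (h : ℕ) : ℚ⟦X⟧ :=
  mk fun x => ∑ j ∈ range x, (catalanCount S1 j (x + h) : ℚ)

lemma heightSeries_eq_lastStep (h : ℕ) :
    heightSeries h = (if h = 0 then 1 else 0) + X * heightSeries h +
      ∑ j ∈ range h, heightSeries j + horizontalSeries h := by
  ext (_ | x)
  · rcases h with _ | h
    · simp [heightSeries, horizontalSeries, catalanCount_zero_zero zero_notMem_S1]
    · have hrec := catalanCount_S1 (x := 0) (y := h + 1) (by omega) (by omega)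
      simp only [if_neg (by omega : ¬ 1 ≤ 0), range_zero, sum_empty, ← range_eq_Ico] at hrec
      simp [heightSeries, horizontalSeries, map_sum, hrec]
  · have hrec := catalanCount_S1 (x := x + 1) (y := x + 1 + h) (by omega) (by omega)
    rw [if_pos (by omega), sum_Ico_eq_sum_range, show x + 1 + h - (x + 1) = h by omega,
      show x + 1 + h - 1 = x + h by omega] at hrec
    simp only [heightSeries, horizontalSeries, map_add, map_sum, coeff_mk, coeff_succ_X_mul]
    split_ifs <;> simp only [coeff_one, map_zero] <;> push_cast [hrec] <;> ring

lemma horizontalSeries_eq (h : ℕ) :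
    horizontalSeries h = X * (heightSeries (h + 1) + horizontalSeries (h + 1)) := by
  ext (_ | x)
  · simp [horizontalSeries]
  · simp only [horizontalSeries, heightSeries, coeff_succ_X_mul, map_add, coeff_mk,
      sum_range_succ, show x + 1 + h = x + (h + 1) by omega]
    ring

lemma heightSeries_succ (h : ℕ) :
    X * (2 - X) * heightSeries (h + 1) =
      heightSeries h - (if h = 0 then 1 else 0) - (1 - X) * ∑ j ∈ range h, heightSeries j := by
  have e₀ := heightSeries_eq_lastStep h
  have e₁ := heightSeries_eq_lastStep (h + 1)
  rw [if_neg h.succ_ne_zero, sum_range_succ] at e₁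
  linear_combination -e₀ + X * e₁ - horizontalSeries_eq h

lemma heightSeries_add_two (h : ℕ) :
    X * (2 - X) * heightSeries (h + 2) =
      (1 + 2 * X - X ^ 2) * heightSeries (h + 1) - (2 - X) * heightSeries h +
        (if h = 0 then 1 else 0) := by
  have r₁ := heightSeries_succ (h + 1)
  rw [if_neg h.succ_ne_zero, sum_range_succ] at r₁
  linear_combination r₁ - heightSeries_succ h

end GeneratingFunctions

section Kernel

variable {W : ℚ⟦X⟧}

lemma heightSeries_two_eq (hW : W ^ 2 = (X - 1) * (-1 + 11 * X - 7 * X ^ 2 + X ^ 3))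
    (hW₀ : constantCoeff W = 1) :
    2 * X * (2 - X) * heightSeries 2 = (1 + 2 * X - X ^ 2 - W) * heightSeries 1 := by
  have hunit : IsUnit (1 + 2 * X - X ^ 2 + W) := by
    simp [isUnit_iff_constantCoeff, hW₀]
  set D : ℕ → ℚ⟦X⟧ := fun h =>
    2 * X * (2 - X) * heightSeries (h + 2) - (1 + 2 * X - X ^ 2 - W) * heightSeries (h + 1)
  have hD : ∀ h, (1 + 2 * X - X ^ 2 + W) * D h = X * (2 * (2 - X)) * D (h + 1) := fun h => by
    have hrec := heightSeries_add_two (h + 1)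
    rw [if_neg h.succ_ne_zero] at hrec
    linear_combination (-4 * X * (2 - X)) * hrec + heightSeries (h + 1) * hW
  linear_combination eq_zero_of_isUnit_mul_eq_X_mul_succ hunit hD 0

lemma sub_mul_heightSeries_zero_eq (hW : W ^ 2 = (X - 1) * (-1 + 11 * X - 7 * X ^ 2 + X ^ 3))
    (hW₀ : constantCoeff W = 1) :
    1 + 2 * X - X ^ 2 - 2 * X * (2 - X) ^ 2 * heightSeries 0 = W := by
  have K := heightSeries_two_eq hW hW₀
  have T := heightSeries_add_two 0
  have R := heightSeries_succ 0
  simp only [↓reduceIte, range_zero, sum_empty, mul_zero, sub_zero] at T R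
  have hfactor : (1 + 2 * X - X ^ 2 + W - 2 * X * (2 - X) ^ 2) *
      (1 + 2 * X - X ^ 2 - 2 * X * (2 - X) ^ 2 * heightSeries 0 - W) = 0 := by
    linear_combination -hW + 2 * X * (2 - X) ^ 2 *
      (X * (2 - X) * (2 * T - K) + (1 + 2 * X - X ^ 2 + W) * R)
  have hne : 1 + 2 * X - X ^ 2 + W - 2 * X * (2 - X) ^ 2 ≠ 0 := fun h => by
    simpa [hW₀] using congrArg constantCoeff h
  exact sub_eq_zero.mp ((mul_eq_zero.mp hfactor).resolve_left hne)

end Kernel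

theorem stmt9 (P1 : PowerSeries ℚ)
    (hP : P1 = PowerSeries.mk fun n => (pCatalan S1 n : ℚ)) :
    ((1 + 2 * PowerSeries.X - PowerSeries.X ^ 2) -
        2 * PowerSeries.X * (PowerSeries.X - 2) ^ 2 * P1) ^ 2 =
      (PowerSeries.X - 1) *
        (-1 + 11 * PowerSeries.X - 7 * PowerSeries.X ^ 2 + PowerSeries.X ^ 3) := by
  obtain ⟨W, hW, hW₀⟩ := exists_sq_eq_and_constantCoeff_eq_one
    (f := (X - 1) * (-1 + 11 * X - 7 * X ^ 2 + X ^ 3 : ℚ⟦X⟧)) (by simp)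
  have hP1 : P1 = heightSeries 0 := hP
  have hsol := sub_mul_heightSeries_zero_eq hW hW₀
  rw [hP1]
  linear_combination (1 + 2 * X - X ^ 2 - 2 * X * (2 - X) ^ 2 * heightSeries 0 + W) * hsol + hW
end

section
/- Let S = {(1,0),(0,1),(1,2)} (the step set of Tugger paths), let p_n be the number of Catalan S-paths from (0,0) to (n,n), and let P(t) = Σ_{n≥0} p_n tⁿ ∈ ℚ⟦t⟧. Then in ℚ⟦t⟧: (1 − 2t(1+t)·P(t))² = 1 − 4t − 4t² (equivalently, P(t) = (1 − √(1 − 4t − 4t²))/(2t(1+t))). -/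
/-- The step set of Tugger paths. -/
def tuggerSteps : Set (ℕ × ℕ) := {(1, 0), (0, 1), (1, 2)}

/-!
Measure a Tugger path by its height `y - x`: the steps `(0,1)` and `(1,2)` go up by one and
`(1,0)` goes down by one, so Catalan paths to `(n,n)` are excursions of this walk. Cutting a
nonempty excursion at its first return to height `0` writes it uniquely as
`(e, e+1) · q · (1,0) · r` with `e ≤ 1` and excursions `q`, `r`; counting by the final
`x`-coordinate gives `P = 1 + t(1+t)P²`, and completing the square yields the identity.
-/

open List

def IsExcursion {α : Type*} (f : α → ℤ) (l : List α) : Prop :=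
  (l.map f).sum = 0 ∧ ∀ k, 0 ≤ ((l.take k).map f).sum

namespace IsExcursion

variable {α : Type*} {f : α → ℤ}

theorem nil : IsExcursion f [] := ⟨rfl, fun _ => by simp⟩

theorem cons_append_cons {a b : α} {u v : List α} (ha : 0 ≤ f a) (hab : f a + f b = 0)
    (hu : IsExcursion f u) (hv : IsExcursion f v) : IsExcursion f (a :: (u ++ b :: v)) := by
  refine ⟨by simp [hu.1, hv.1, hab], fun k => ?_⟩
  rcases k with _ | k
  · simp
  rw [take_succ_cons, take_append]
  obtain hk | ⟨m, hm⟩ : k - u.length = 0 ∨ ∃ m, k - u.length = m + 1 :=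
    (k - u.length).eq_zero_or_eq_succ_pred.imp_right fun h => ⟨_, h⟩
  · simp only [hk, take_zero, append_nil, map_cons, sum_cons]
    linarith [hu.2 k]
  · rw [hm, take_succ_cons, take_of_length_le (by omega)]
    simp only [map_cons, map_append, sum_cons, sum_append, hu.1]
    linarith [hv.2 m]

theorem exists_eq_append_cons_of_sum_neg {t : List α} (hf : ∀ x ∈ t, -1 ≤ f x)
    (hneg : (t.map f).sum < 0) : ∃ u b v, t = u ++ b :: v ∧ f b = -1 ∧ IsExcursion f u := by
  classical
  -- cut `t` just before its shortest prefix with negative sum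
  have hex : ∃ k, ((t.take k).map f).sum < 0 := ⟨t.length, by simpa using hneg⟩
  obtain ⟨k, hk⟩ : ∃ k, Nat.find hex = k + 1 :=
    Nat.exists_eq_succ_of_ne_zero fun h => not_le.mpr (Nat.find_spec hex) (by rw [h]; simp)
  have hmin : ∀ j ≤ k, 0 ≤ ((t.take j).map f).sum :=
    fun j hj => not_lt.mp (Nat.find_min hex (by omega))
  have hspec := Nat.find_spec hex
  rw [hk] at hspec
  have hlt : k < t.length := by
    by_contra! h
    have := hmin k le_rfl
    rw [take_of_length_le h] at this
    rw [take_of_length_le (by omega)] at hspec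
    omega
  have hcut : ((t.take k).map f).sum = 0 ∧ f t[k] = -1 := by
    have := hf t[k] (getElem_mem hlt)
    have := hmin k le_rfl
    simp only [take_succ_eq_append_getElem hlt, map_append, sum_append, map_cons, map_nil,
      sum_cons, sum_nil] at hspec
    omega
  refine ⟨t.take k, t[k], t.drop (k + 1), ?_, hcut.2, hcut.1, fun j => ?_⟩
  · rw [← drop_eq_getElem_cons hlt, take_append_drop]
  · rw [take_take]
    exact hmin _ (min_le_right _ _)

theorem exists_eq_cons_append_cons {l : List α} (hf : ∀ x ∈ l, f x = 1 ∨ f x = -1)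
    (hl : IsExcursion f l) (hne : l ≠ []) :
    ∃ a u b v, l = a :: (u ++ b :: v) ∧ f a = 1 ∧ f b = -1 ∧ IsExcursion f u ∧
      IsExcursion f v := by
  obtain ⟨a, t, rfl⟩ := exists_cons_of_ne_nil hne
  have ha : f a = 1 := by
    have := hl.2 1
    rcases hf a mem_cons_self with h | h <;> simp_all
  have ht : (t.map f).sum = -1 := by
    have := hl.1
    simp only [map_cons, sum_cons, ha] at this
    omega
  obtain ⟨u, b, v, rfl, hb, hu⟩ := exists_eq_append_cons_of_sum_neg (f := f)
    (fun x hx => by rcases hf x (mem_cons_of_mem a hx) with h | h <;> omega) (by omega)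
  refine ⟨a, u, b, v, rfl, ha, hb, hu, ?_, fun m => ?_⟩
  · simp only [map_append, map_cons, sum_append, sum_cons, hu.1] at ht
    omega
  · have := hl.2 (u.length + (m + 1) + 1)
    rw [take_succ_cons, take_append, take_of_length_le (by omega), Nat.add_sub_cancel_left,
      take_succ_cons] at this
    simp only [map_cons, map_append, sum_cons, sum_append, hu.1, ha, hb] at this
    omega

theorem length_le_of_append_cons_eq {u u' v v' : List α} {b b' : α} (hb : f b < 0)
    (hu : IsExcursion f u) (hu' : IsExcursion f u') (h : u ++ b :: v = u' ++ b' :: v') :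
    u'.length ≤ u.length := by
  by_contra! hlt
  have hpre := congrArg (take (u.length + 1)) h
  rw [take_append, take_of_length_le (by omega), Nat.add_sub_cancel_left, take_append,
    Nat.sub_eq_zero_of_le hlt, take_zero, append_nil, take_succ_cons, take_zero] at hpre
  have := hu'.2 (u.length + 1)
  rw [← hpre, map_append, sum_append, hu.1] at this
  simp only [map_cons, map_nil, sum_cons, sum_nil] at this
  omega

theorem append_cons_inj {u u' v v' : List α} {b b' : α} (hb : f b < 0)
    (hb' : f b' < 0) (hu : IsExcursion f u) (hu' : IsExcursion f u')
    (h : u ++ b :: v = u' ++ b' :: v') : u = u' ∧ b = b' ∧ v = v' := by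
  have hlen : u.length = u'.length :=
    le_antisymm (hu'.length_le_of_append_cons_eq hb' hu h.symm)
      (hu.length_le_of_append_cons_eq hb hu' h)
  obtain ⟨rfl, hbv⟩ := append_inj h hlen
  exact ⟨rfl, cons_eq_cons.mp hbv⟩

end IsExcursion

namespace Tugger

def height (s : ℕ × ℕ) : ℤ := s.2 - s.1

theorem sum_map_height (p : List (ℕ × ℕ)) :
    (p.map height).sum = ((p.map Prod.snd).sum : ℤ) - (p.map Prod.fst).sum := by
  induction p with
  | nil => simp
  | cons s p ih => simp only [map_cons, sum_cons, ih, height]; push_cast; ring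

def catalanPaths (n : ℕ) : Set (List (ℕ × ℕ)) :=
  {p | IsPath tuggerSteps n n p ∧ IsCatalan p}

theorem mem_catalanPaths {n : ℕ} {p : List (ℕ × ℕ)} :
    p ∈ catalanPaths n ↔
      (∀ s ∈ p, s ∈ tuggerSteps) ∧ IsExcursion height p ∧ (p.map Prod.fst).sum = n := by
  have hcat : IsCatalan p ↔ ∀ k, 0 ≤ ((p.take k).map height).sum := by
    simp only [IsCatalan, xPart, yPart, sum_map_height, sub_nonneg, Nat.cast_le]
    refine ⟨fun h k => ?_, fun h j _ => h j⟩
    rcases le_total k p.length with hk | hk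
    · exact h k hk
    · simpa [take_of_length_le hk] using h p.length le_rfl
  simp only [catalanPaths, Set.mem_ofPred_eq, IsPath, xPart, yPart, take_length, hcat,
    IsExcursion, sum_map_height]
  constructor
  · rintro ⟨⟨hS, hx, hy⟩, hc⟩
    exact ⟨hS, ⟨by omega, hc⟩, hx⟩
  · rintro ⟨hS, ⟨hxy, hc⟩, hx⟩
    exact ⟨⟨hS, hx, by omega⟩, hc⟩

theorem height_eq_one_or_neg_one {s : ℕ × ℕ} (hs : s ∈ tuggerSteps) :
    height s = 1 ∨ height s = -1 := by
  rcases hs with rfl | rfl | rfl <;> simp [height]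

theorem eq_of_height_eq_neg_one {s : ℕ × ℕ} (hs : s ∈ tuggerSteps) (h : height s = -1) :
    s = (1, 0) := by
  rcases hs with rfl | rfl | rfl <;> simp_all [height]

theorem exists_eq_of_height_eq_one {s : ℕ × ℕ} (hs : s ∈ tuggerSteps) (h : height s = 1) :
    ∃ e ≤ 1, s = (e, e + 1) := by
  rcases hs with rfl | rfl | rfl <;> simp_all [height]

def nest (e : ℕ) (q r : List (ℕ × ℕ)) : List (ℕ × ℕ) := (e, e + 1) :: (q ++ (1, 0) :: r)

theorem nest_mem_catalanPaths {e i j : ℕ} {q r : List (ℕ × ℕ)} (he : e ≤ 1)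
    (hq : q ∈ catalanPaths i) (hr : r ∈ catalanPaths j) :
    nest e q r ∈ catalanPaths (e + i + j + 1) := by
  rw [mem_catalanPaths] at hq hr ⊢
  obtain ⟨hqS, hq, hqx⟩ := hq
  obtain ⟨hrS, hr, hrx⟩ := hr
  refine ⟨?_, hq.cons_append_cons (by simp [height]) (by simp [height]) hr, ?_⟩
  · have : (e, e + 1) ∈ tuggerSteps := by interval_cases e <;> simp [tuggerSteps]
    simp only [nest, mem_cons, mem_append]
    rintro s (rfl | hs | rfl | hs)
    exacts [this, hqS s hs, by simp [tuggerSteps], hrS s hs]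
  · simp only [nest, map_cons, map_append, sum_cons, sum_append, hqx, hrx]
    omega

theorem nest_inj {e e' i i' : ℕ} {q q' r r' : List (ℕ × ℕ)} (hq : q ∈ catalanPaths i)
    (hq' : q' ∈ catalanPaths i') (h : nest e q r = nest e' q' r') :
    e = e' ∧ q = q' ∧ r = r' := by
  obtain ⟨he, h⟩ := List.cons_eq_cons.mp h
  obtain ⟨hqq, -, hrr⟩ := IsExcursion.append_cons_inj (by simp [height]) (by simp [height])
    (mem_catalanPaths.mp hq).2.1 (mem_catalanPaths.mp hq').2.1 h
  exact ⟨(Prod.mk.inj he).1, hqq, hrr⟩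

theorem exists_nest_eq {n : ℕ} {p : List (ℕ × ℕ)} (hp : p ∈ catalanPaths (n + 1)) :
    ∃ e i j q r, e ≤ 1 ∧ e + i + j = n ∧ q ∈ catalanPaths i ∧ r ∈ catalanPaths j ∧
      nest e q r = p := by
  obtain ⟨hS, hp, hx⟩ := mem_catalanPaths.mp hp
  have hne : p ≠ [] := by rintro rfl; simp at hx
  obtain ⟨a, q, b, r, rfl, ha, hb, hq, hr⟩ :=
    hp.exists_eq_cons_append_cons (fun s hs => height_eq_one_or_neg_one (hS s hs)) hne
  obtain ⟨e, he, rfl⟩ := exists_eq_of_height_eq_one (hS _ mem_cons_self) ha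
  obtain rfl := eq_of_height_eq_neg_one (hS b (by simp)) hb
  refine ⟨e, (q.map Prod.fst).sum, (r.map Prod.fst).sum, q, r, he, ?_,
    mem_catalanPaths.mpr ⟨fun s hs => hS s (by simp [hs]), hq, rfl⟩,
    mem_catalanPaths.mpr ⟨fun s hs => hS s (by simp [hs]), hr, rfl⟩, rfl⟩
  simp only [map_cons, map_append, sum_cons, sum_append] at hx
  omega

theorem length_le_of_mem_catalanPaths {n : ℕ} {p : List (ℕ × ℕ)}
    (hp : p ∈ catalanPaths n) : p.length ≤ 2 * n := by
  obtain ⟨hS, hp, hx⟩ := mem_catalanPaths.mp hp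
  have hy := hp.1
  rw [sum_map_height, hx] at hy
  have hstep : ∀ m ∈ p.map fun s => s.1 + s.2, 1 ≤ m := by
    simp only [mem_map, forall_exists_index, and_imp]
    rintro _ s hs rfl
    rcases hS s hs with rfl | rfl | rfl <;> simp
  have := length_le_sum_of_one_le _ hstep
  rw [length_map, sum_map_add] at this
  omega

theorem catalanPaths_zero : catalanPaths 0 = {[]} := by
  ext p
  refine ⟨fun hp => length_eq_zero_iff.mp (by simpa using length_le_of_mem_catalanPaths hp), ?_⟩
  rintro rfl
  exact mem_catalanPaths.mpr ⟨by simp, .nil, rfl⟩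

theorem catalanPaths_finite (n : ℕ) : (catalanPaths n).Finite := by
  have : Finite tuggerSteps := by unfold tuggerSteps; infer_instance
  refine ((List.finite_length_le tuggerSteps (2 * n)).image (map Subtype.val)).subset ?_
  intro p hp
  lift p to List tuggerSteps using (mem_catalanPaths.mp hp).1
  exact ⟨p, by simpa using length_le_of_mem_catalanPaths hp, rfl⟩

open Finset in
-- `em = (e, m)` records the first step `(e, e + 1)`, and `i + j = m` the ends `(i, i)`,
-- `(j, j)` of the two excursions `q`, `r` in `nest e q r`.
abbrev NestIndex (n : ℕ) : Type :=
  Σ em : (antidiagonal n).filter (·.1 ≤ 1), Σ ij : antidiagonal em.1.2,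
    catalanPaths ij.1.1 × catalanPaths ij.1.2

def nestOfIndex (n : ℕ) (x : NestIndex n) : catalanPaths (n + 1) :=
  ⟨nest x.1.1.1 x.2.2.1 x.2.2.2, by
    obtain ⟨⟨⟨e, m⟩, hem⟩, ⟨⟨i, j⟩, hij⟩, q, r⟩ := x
    simp only [Finset.mem_filter, Finset.HasAntidiagonal.mem_antidiagonal] at hem hij
    simpa [← hem.1, ← hij, add_assoc] using nest_mem_catalanPaths hem.2 q.2 r.2⟩

theorem nestOfIndex_bijective (n : ℕ) : Function.Bijective (nestOfIndex n) := by
  constructor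
  · rintro ⟨⟨⟨e, m⟩, hem⟩, ⟨⟨i, j⟩, hij⟩, ⟨q, hq⟩, ⟨r, hr⟩⟩
      ⟨⟨⟨e', m'⟩, hem'⟩, ⟨⟨i', j'⟩, hij'⟩, ⟨q', hq'⟩, ⟨r', hr'⟩⟩ h
    obtain ⟨rfl, rfl, rfl⟩ := nest_inj hq hq' (congrArg Subtype.val h)
    obtain rfl : i = i' :=
      (mem_catalanPaths.mp hq).2.2.symm.trans (mem_catalanPaths.mp hq').2.2
    obtain rfl : j = j' :=
      (mem_catalanPaths.mp hr).2.2.symm.trans (mem_catalanPaths.mp hr').2.2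
    obtain rfl : m = m' := (Finset.HasAntidiagonal.mem_antidiagonal.mp hij).symm.trans
      (Finset.HasAntidiagonal.mem_antidiagonal.mp hij')
    rfl
  · rintro ⟨p, hp⟩
    obtain ⟨e, i, j, q, r, he, hn, hq, hr, rfl⟩ := exists_nest_eq hp
    exact ⟨⟨⟨(e, i + j), by simp [he, ← hn, add_assoc]⟩, ⟨(i, j), by simp⟩,
      ⟨q, hq⟩, ⟨r, hr⟩⟩, rfl⟩

theorem pCatalan_zero : pCatalan tuggerSteps 0 = 1 := by
  rw [← Set.ncard_singleton ([] : List (ℕ × ℕ)), ← catalanPaths_zero]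
  rfl

open Finset in
theorem pCatalan_succ (n : ℕ) :
    pCatalan tuggerSteps (n + 1) = ∑ em ∈ (antidiagonal n).filter (·.1 ≤ 1),
      ∑ ij ∈ antidiagonal em.2, pCatalan tuggerSteps ij.1 * pCatalan tuggerSteps ij.2 := by
  have (k : ℕ) : Finite (catalanPaths k) := (catalanPaths_finite k).to_subtype
  calc pCatalan tuggerSteps (n + 1) = Nat.card (catalanPaths (n + 1)) :=
        (Nat.card_coe_set_eq _).symm
    _ = Nat.card (NestIndex n) := (Nat.card_eq_of_bijective _ (nestOfIndex_bijective n)).symm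
    _ = _ := by
      simp only [Nat.card_sigma, Nat.card_prod, Nat.card_coe_set_eq]
      rw [← Finset.sum_attach ((antidiagonal n).filter (·.1 ≤ 1))]
      refine Finset.sum_congr rfl fun em _ => ?_
      rw [← Finset.sum_attach (antidiagonal em.1.2)]
      rfl

open PowerSeries in
theorem coeff_one_add_X {R : Type*} [Semiring R] (e : ℕ) :
    coeff e (1 + X : PowerSeries R) = if e ≤ 1 then 1 else 0 := by
  rcases e with _ | _ | e <;> simp [coeff_X]

open PowerSeries Finset in
theorem generatingFunction_eq (P : PowerSeries ℚ)
    (hP : P = PowerSeries.mk fun n => (pCatalan tuggerSteps n : ℚ)) :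
    P = 1 + X * (1 + X) * P ^ 2 := by
  have hcoeff (n : ℕ) : coeff n P = pCatalan tuggerSteps n := by simp [hP]
  ext n
  rcases n with _ | n
  · simp [hcoeff, pCatalan_zero]
  · rw [mul_assoc, map_add, coeff_succ_X_mul, coeff_mul, hcoeff, pCatalan_succ, coeff_one,
      if_neg n.succ_ne_zero, zero_add, sum_filter]
    push_cast
    refine sum_congr rfl fun em _ => ?_
    rw [coeff_one_add_X, pow_two, coeff_mul]
    split_ifs <;> simp [hcoeff]

end Tugger

open Tugger in
theorem stmt11 (P : PowerSeries ℚ)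
    (hP : P = PowerSeries.mk fun n => (pCatalan tuggerSteps n : ℚ)) :
    (1 - 2 * PowerSeries.X * (1 + PowerSeries.X) * P) ^ 2 =
      1 - 4 * PowerSeries.X - 4 * PowerSeries.X ^ 2 := by
  linear_combination (-4 * PowerSeries.X * (1 + PowerSeries.X)) * generatingFunction_eq P hP
end

section
/- Let A be a commutative ring, let S be a step set that contains every horizontal step (a,0) with a ≥ 1 and such that every (a,b) ∈ S with b > 0 satisfies a ≤ b, and let w : S → A be a weight function assigning the same element ρ ∈ A to every horizontal step (a,0). Let P^w(t) = Σ_{n≥0} p^w_n tⁿ, let T^w(t) = Σ_{a≥1, (a,a)∈S} w((a,a)) tᵃ, let E_0^w(t) be the power series whose coefficient of tⁿ is Σ_{j=0}^{n} a^w_{j,n}, and let E_1^w(t) be the power series whose coefficient of tⁿ is Σ_{j=0}^{n−1} a^w_{j,n}. Then in A⟦t⟧: P^w(t) · (1 + (1 + ρ − T^w(t)) · E_1^w(t)) = E_0^w(t). -/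
/-!
Grade paths by the height of their endpoint and write `P`, `T`, `U`, `V`, `D`, `E₁` for the
generating series of Catalan paths, single diagonal steps, nonempty paths staying strictly above
the diagonal, paths staying weakly above it, paths ending on it and paths ending strictly above it.
Three classical decompositions give
* `P = 1 + (T + ρU) P`, cutting at the first return to the diagonal: an arch is a diagonal step
  or a path strictly above followed by the horizontal step back to the diagonal;
* `V = P (1 + U)`, cutting at the last visit of the diagonal;
* `D = P + ρ V E₁`, cutting at the first node strictly below the diagonal, which a step with
  `b > 0` cannot reach from a node weakly above since it has `a ≤ b`.
As `E₀ = E₁ + D`, the claim becomes `E₁ (P - 1 - (T + ρU) P) = 0`.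
-/

theorem List.sum_map_fst {M N : Type*} [AddMonoid M] [AddMonoid N] (l : List (M × N)) :
    (l.map Prod.fst).sum = l.sum.1 := by
  induction l <;> simp [*]

theorem List.sum_map_snd {M N : Type*} [AddMonoid M] [AddMonoid N] (l : List (M × N)) :
    (l.map Prod.snd).sum = l.sum.2 := by
  induction l <;> simp [*]

theorem List.exists_eq_append_of_le_length {α : Type*} {p : List α} {c : ℕ} (hc : c ≤ p.length) :
    ∃ q r, p = q ++ r ∧ q.length = c :=
  ⟨p.take c, p.drop c, (List.take_append_drop c p).symm, List.length_take_of_le hc⟩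

theorem List.exists_eq_append_cons_of_lt_length {α : Type*} {p : List α} {c : ℕ}
    (hc : c < p.length) : ∃ q s r, p = q ++ s :: r ∧ q.length = c :=
  ⟨p.take c, p[c], p.drop (c + 1), by rw [← List.drop_eq_getElem_cons hc, List.take_append_drop],
    List.length_take_of_le hc.le⟩

theorem finsum_mem_prod_mul {α β R : Type*} [NonUnitalNonAssocSemiring R] {s : Set α}
    {t : Set β} (hs : s.Finite) (ht : t.Finite) (f : α → R) (g : β → R) :
    ∑ᶠ x ∈ s ×ˢ t, f x.1 * g x.2 = (∑ᶠ a ∈ s, f a) * ∑ᶠ b ∈ t, g b := by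
  rw [finsum_mem_eq_finite_toFinset_sum _ (hs.prod ht), finsum_mem_eq_finite_toFinset_sum _ hs,
    finsum_mem_eq_finite_toFinset_sum _ ht, ← hs.toFinset_prod ht, Finset.sum_product,
    Finset.sum_mul_sum]

namespace LatticePath

section Nodes

def node (p : List (ℕ × ℕ)) (j : ℕ) : ℕ × ℕ := (p.take j).sum

theorem xPart_eq (p : List (ℕ × ℕ)) (j : ℕ) : xPart p j = (node p j).1 := List.sum_map_fst _

theorem yPart_eq (p : List (ℕ × ℕ)) (j : ℕ) : yPart p j = (node p j).2 := List.sum_map_snd _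

theorem isCatalan_iff {p : List (ℕ × ℕ)} :
    IsCatalan p ↔ ∀ j ≤ p.length, (node p j).1 ≤ (node p j).2 := by
  simp only [IsCatalan, xPart_eq, yPart_eq]

@[simp] theorem node_zero (p : List (ℕ × ℕ)) : node p 0 = 0 := by simp [node]

theorem node_of_length_le {p : List (ℕ × ℕ)} {j : ℕ} (h : p.length ≤ j) : node p j = p.sum := by
  rw [node, List.take_of_length_le h]

@[simp] theorem node_length (p : List (ℕ × ℕ)) : node p p.length = p.sum :=
  node_of_length_le le_rfl

theorem isPath_iff {S : Set (ℕ × ℕ)} {n m : ℕ} {p : List (ℕ × ℕ)} :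
    IsPath S n m p ↔ (∀ s ∈ p, s ∈ S) ∧ p.sum = (n, m) := by
  simp only [IsPath, xPart_eq, yPart_eq, node_length, Prod.ext_iff]

theorem node_append (q r : List (ℕ × ℕ)) (j : ℕ) :
    node (q ++ r) j = node q j + node r (j - q.length) := by
  simp only [node, List.take_append, List.sum_append]

theorem node_append_of_le {q : List (ℕ × ℕ)} (r : List (ℕ × ℕ)) {j : ℕ} (h : j ≤ q.length) :
    node (q ++ r) j = node q j := by
  simp [node_append, Nat.sub_eq_zero_of_le h]

theorem node_append_add (q r : List (ℕ × ℕ)) (j : ℕ) :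
    node (q ++ r) (q.length + j) = q.sum + node r j := by
  simp [node_append, node_of_length_le]

theorem node_append_cons (q : List (ℕ × ℕ)) (s : ℕ × ℕ) (r : List (ℕ × ℕ)) :
    node (q ++ s :: r) (q.length + 1) = q.sum + s := by
  simp [node]

theorem forall_node_append {P : ℕ × ℕ → Prop} {q r : List (ℕ × ℕ)} :
    (∀ j ≤ (q ++ r).length, P (node (q ++ r) j)) ↔
      (∀ j ≤ q.length, P (node q j)) ∧ ∀ j ≤ r.length, P (q.sum + node r j) := by
  refine ⟨fun h => ⟨fun j hj => ?_, fun j hj => ?_⟩, fun ⟨hq, hr⟩ j hj => ?_⟩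
  · simpa [node_append_of_le r hj] using h j (by simp; omega)
  · simpa [node_append_add] using h (q.length + j) (by simp; omega)
  · rcases le_or_gt j q.length with hjq | hjq
    · simpa [node_append_of_le r hjq] using hq j hjq
    · obtain ⟨k, rfl⟩ := Nat.exists_eq_add_of_le hjq.le
      simpa [node_append_add] using hr k (by simp at hj; omega)

end Nodes

section Series

def level (X : Set (List (ℕ × ℕ))) (n : ℕ) : Set (List (ℕ × ℕ)) := {p ∈ X | p.sum.2 = n}

def LevelFinite (X : Set (List (ℕ × ℕ))) : Prop := ∀ n, (level X n).Finite

theorem LevelFinite.subset {X Y : Set (List (ℕ × ℕ))} (hY : LevelFinite Y) (h : X ⊆ Y) :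
    LevelFinite X :=
  fun n => (hY n).subset fun _ hp => ⟨h hp.1, hp.2⟩

theorem levelFinite_singleton_nil : LevelFinite {[]} :=
  fun _ => (Set.finite_singleton []).subset fun _ hp => hp.1

theorem level_image2 {X Y : Set (List (ℕ × ℕ))} {g : List (ℕ × ℕ) → List (ℕ × ℕ) → List (ℕ × ℕ)}
    (hg_sum : ∀ q ∈ X, ∀ r ∈ Y, (g q r).sum.2 = q.sum.2 + r.sum.2) (n : ℕ) :
    level (Set.image2 g X Y) n = (fun x => g x.1 x.2) ''
      ⋃ kl ∈ (Finset.HasAntidiagonal.antidiagonal n : Set (ℕ × ℕ)),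
        level X kl.1 ×ˢ level Y kl.2 := by
  ext p
  simp only [level, Set.mem_ofPred_eq, Set.mem_image2, Set.mem_image, Set.mem_iUnion,
    Set.mem_prod, Finset.mem_coe, Finset.HasAntidiagonal.mem_antidiagonal, Prod.exists]
  constructor
  · rintro ⟨⟨q, hq, r, hr, rfl⟩, rfl⟩
    exact ⟨q, r, ⟨_, _, (hg_sum q hq r hr).symm, ⟨hq, rfl⟩, hr, rfl⟩, rfl⟩
  · rintro ⟨q, r, ⟨k, l, hkl, ⟨hq, rfl⟩, hr, rfl⟩, rfl⟩
    exact ⟨⟨q, hq, r, hr, rfl⟩, (hg_sum q hq r hr).trans hkl⟩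

variable {A : Type*} [CommRing A] (w : ℕ × ℕ → A)

noncomputable def pathSeries (X : Set (List (ℕ × ℕ))) : PowerSeries A :=
  PowerSeries.mk fun n => ∑ᶠ p ∈ level X n, (p.map w).prod

theorem pathSeries_union {X Y : Set (List (ℕ × ℕ))} (hX : LevelFinite X) (hY : LevelFinite Y)
    (hXY : Disjoint X Y) : pathSeries w (X ∪ Y) = pathSeries w X + pathSeries w Y := by
  ext n
  simp only [pathSeries, map_add, PowerSeries.coeff_mk]
  rw [show level (X ∪ Y) n = level X n ∪ level Y n by ext; simp [level, or_and_right]]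
  exact finsum_mem_union (hXY.mono (Set.sep_subset _ _) (Set.sep_subset _ _)) (hX n) (hY n)

theorem pathSeries_singleton_nil : pathSeries w {[]} = (1 : PowerSeries A) := by
  ext n
  simp only [pathSeries, PowerSeries.coeff_mk, PowerSeries.coeff_one]
  split_ifs with hn
  · rw [show level {[]} n = {[]} by ext; simp +contextual [level, hn], finsum_mem_singleton]
    simp
  · rw [show level {[]} n = ∅ by ext; simp +contextual [level, Ne.symm hn], finsum_mem_empty]

theorem pathSeries_eq_one_add {X : Set (List (ℕ × ℕ))} (hX : LevelFinite X) (hnil : [] ∈ X) :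
    pathSeries w X = 1 + pathSeries w (X \ {[]}) := by
  rw [← pathSeries_singleton_nil w, ← pathSeries_union w levelFinite_singleton_nil
    (hX.subset Set.sdiff_subset) Set.disjoint_sdiff_right, Set.union_sdiff_cancel
    (Set.singleton_subset_iff.2 hnil)]

theorem pathSeries_image2 {X Y : Set (List (ℕ × ℕ))} (hX : LevelFinite X) (hY : LevelFinite Y)
    (g : List (ℕ × ℕ) → List (ℕ × ℕ) → List (ℕ × ℕ)) (c : A)
    (hg_inj : ∀ q ∈ X, ∀ r ∈ Y, ∀ q' ∈ X, ∀ r' ∈ Y, g q r = g q' r' → q = q' ∧ r = r')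
    (hg_sum : ∀ q ∈ X, ∀ r ∈ Y, (g q r).sum.2 = q.sum.2 + r.sum.2)
    (hg_prod : ∀ q ∈ X, ∀ r ∈ Y, ((g q r).map w).prod = c * (q.map w).prod * (r.map w).prod) :
    pathSeries w (Set.image2 g X Y) = PowerSeries.C c * pathSeries w X * pathSeries w Y := by
  ext n
  rw [mul_assoc, PowerSeries.coeff_C_mul]
  simp only [pathSeries, PowerSeries.coeff_mul, PowerSeries.coeff_mk]
  have hinj : Set.InjOn (fun x => g x.1 x.2)
      (⋃ kl ∈ (Finset.HasAntidiagonal.antidiagonal n : Set (ℕ × ℕ)),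
        level X kl.1 ×ˢ level Y kl.2) := by
    simp only [Set.InjOn, Set.mem_iUnion, Set.mem_prod]
    rintro ⟨q, r⟩ ⟨_, _, hq, hr⟩ ⟨q', r'⟩ ⟨_, _, hq', hr'⟩ h
    obtain ⟨rfl, rfl⟩ := hg_inj q hq.1 r hr.1 q' hq'.1 r' hr'.1 h
    rfl
  have hdisj : (Finset.HasAntidiagonal.antidiagonal n : Set (ℕ × ℕ)).PairwiseDisjoint
      fun kl => level X kl.1 ×ˢ level Y kl.2 := by
    rintro ⟨k, l⟩ - ⟨k', l'⟩ - hne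
    refine Set.disjoint_left.2 fun x ⟨⟨_, hk⟩, _, hl⟩ ⟨⟨_, hk'⟩, _, hl'⟩ => hne ?_
    simp only at hk hl hk' hl'
    rw [← hk, ← hl, ← hk', ← hl']
  rw [level_image2 hg_sum, finsum_mem_image hinj, finsum_mem_biUnion hdisj
    (Finset.finite_toSet _) fun kl _ => (hX kl.1).prod (hY kl.2), finsum_mem_coe_finset,
    Finset.mul_sum]
  refine Finset.sum_congr rfl fun kl _ => ?_
  rw [← finsum_mem_prod_mul (hX kl.1) (hY kl.2), mul_finsum_mem' _ _ ((hX kl.1).prod (hY kl.2))]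
  exact finsum_mem_congr rfl fun x hx => by rw [hg_prod _ hx.1.1 _ hx.2.1, mul_assoc]

theorem pathSeries_image {X : Set (List (ℕ × ℕ))} (hX : LevelFinite X)
    (g : List (ℕ × ℕ) → List (ℕ × ℕ)) (c : A) (hg_inj : Set.InjOn g X)
    (hg_sum : ∀ q ∈ X, (g q).sum.2 = q.sum.2)
    (hg_prod : ∀ q ∈ X, ((g q).map w).prod = c * (q.map w).prod) :
    pathSeries w (g '' X) = PowerSeries.C c * pathSeries w X := by
  rw [← Set.image2_singleton_right (f := fun q (_ : List (ℕ × ℕ)) => g q) (b := []),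
    pathSeries_image2 w hX levelFinite_singleton_nil _ c, pathSeries_singleton_nil, mul_one]
  · rintro q hq - rfl q' hq' - rfl h
    exact ⟨hg_inj hq hq' h, rfl⟩
  · rintro q hq - rfl
    simp [hg_sum q hq]
  · rintro q hq - rfl
    simp [hg_prod q hq]

end Series

section Families

variable (S : Set (ℕ × ℕ))

def weaklyAbovePaths : Set (List (ℕ × ℕ)) :=
  {p | (∀ s ∈ p, s ∈ S) ∧ ∀ j ≤ p.length, (node p j).1 ≤ (node p j).2}

def strictlyAbovePaths : Set (List (ℕ × ℕ)) :=
  {p | (∀ s ∈ p, s ∈ S) ∧ ∀ j, 0 < j → j ≤ p.length → (node p j).1 < (node p j).2}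

def catalanPaths : Set (List (ℕ × ℕ)) := {p ∈ weaklyAbovePaths S | p.sum.1 = p.sum.2}

def arches : Set (List (ℕ × ℕ)) :=
  {p ∈ catalanPaths S | p ≠ [] ∧ ∀ j, 0 < j → j < p.length → (node p j).1 < (node p j).2}

def diagonalSteps : Set (List (ℕ × ℕ)) := {p | ∃ a, (a, a) ∈ S ∧ p = [(a, a)]}

def diagonalEndPaths : Set (List (ℕ × ℕ)) := {p | (∀ s ∈ p, s ∈ S) ∧ p.sum.1 = p.sum.2}

def aboveEndPaths : Set (List (ℕ × ℕ)) := {p | (∀ s ∈ p, s ∈ S) ∧ p.sum.1 < p.sum.2}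

variable {S}

theorem weaklyAbovePaths_append {q r : List (ℕ × ℕ)} (hq : q ∈ weaklyAbovePaths S)
    (hr : r ∈ weaklyAbovePaths S) : q ++ r ∈ weaklyAbovePaths S := by
  have hqs := hq.2 q.length le_rfl
  simp only [node_length] at hqs
  refine ⟨List.forall_mem_append.2 ⟨hq.1, hr.1⟩,
    (forall_node_append (P := fun v => v.1 ≤ v.2)).2 ⟨hq.2, fun j hj => ?_⟩⟩
  have := hr.2 j hj
  simp only [Prod.fst_add, Prod.snd_add]
  omega

theorem strictlyAbovePaths_subset : strictlyAbovePaths S ⊆ weaklyAbovePaths S := by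
  refine fun p ⟨hS, hp⟩ => ⟨hS, fun j hj => ?_⟩
  rcases j.eq_zero_or_pos with rfl | hj0
  · simp
  · exact (hp j hj0 hj).le

theorem nil_mem_strictlyAbovePaths : [] ∈ strictlyAbovePaths S :=
  ⟨by simp, fun j hj0 hj => absurd hj (by simp; omega)⟩

theorem sum_lt_of_mem_strictlyAbovePaths {p : List (ℕ × ℕ)} (hp : p ∈ strictlyAbovePaths S)
    (hne : p ≠ []) : p.sum.1 < p.sum.2 := by
  simpa using hp.2 p.length (List.length_pos_iff.2 hne) le_rfl

theorem add_pos_of_mem (h00 : (0, 0) ∉ S) {s : ℕ × ℕ} (hs : s ∈ S) : 0 < s.1 + s.2 := by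
  by_contra h
  exact h00 (by rwa [show s = (0, 0) from Prod.ext (by omega) (by omega)] at hs)

theorem finite_setOf_sum_le (h00 : (0, 0) ∉ S) (N : ℕ) :
    {p : List (ℕ × ℕ) | (∀ s ∈ p, s ∈ S) ∧ p.sum.1 + p.sum.2 ≤ N}.Finite := by
  induction N with
  | zero =>
    refine (Set.finite_singleton []).subset ?_
    rintro (_ | ⟨s, r⟩) ⟨hS, hN⟩
    · rfl
    · have := add_pos_of_mem h00 (hS s List.mem_cons_self)
      simp only [List.sum_cons, Prod.fst_add, Prod.snd_add] at hN
      omega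
  | succ N ih =>
    refine ((Set.finite_singleton []).union
      ((Set.finite_Iic ((N + 1, N + 1) : ℕ × ℕ)).image2 List.cons ih)).subset ?_
    rintro (_ | ⟨s, r⟩) ⟨hS, hN⟩
    · exact Or.inl rfl
    · have := add_pos_of_mem h00 (hS s List.mem_cons_self)
      simp only [List.sum_cons, Prod.fst_add, Prod.snd_add] at hN
      exact Or.inr ⟨s, ⟨by omega, by omega⟩, r,
        ⟨fun t ht => hS t (List.mem_cons_of_mem s ht), by omega⟩, rfl⟩

theorem levelFinite_of_forall_mem (h00 : (0, 0) ∉ S) {X : Set (List (ℕ × ℕ))}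
    (hX : ∀ p ∈ X, (∀ s ∈ p, s ∈ S) ∧ p.sum.1 ≤ p.sum.2) : LevelFinite X :=
  fun n => (finite_setOf_sum_le h00 (n + n)).subset fun p ⟨hp, hn⟩ =>
    ⟨(hX p hp).1, by have := (hX p hp).2; omega⟩

theorem levelFinite_weaklyAbovePaths (h00 : (0, 0) ∉ S) : LevelFinite (weaklyAbovePaths S) :=
  levelFinite_of_forall_mem h00 fun p hp => ⟨hp.1, by simpa using hp.2 p.length le_rfl⟩

theorem levelFinite_catalanPaths (h00 : (0, 0) ∉ S) : LevelFinite (catalanPaths S) :=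
  (levelFinite_weaklyAbovePaths h00).subset (Set.sep_subset _ _)

theorem levelFinite_diagonalEndPaths (h00 : (0, 0) ∉ S) : LevelFinite (diagonalEndPaths S) :=
  levelFinite_of_forall_mem h00 fun _ hp => ⟨hp.1, hp.2.le⟩

theorem levelFinite_aboveEndPaths (h00 : (0, 0) ∉ S) : LevelFinite (aboveEndPaths S) :=
  levelFinite_of_forall_mem h00 fun _ hp => ⟨hp.1, hp.2.le⟩

end Families

section HorizontalJoin

variable {S : Set (ℕ × ℕ)}

/-- `q`, then the horizontal step that makes the whole path end on the diagonal, then `r`. -/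
def horizontalJoin (q r : List (ℕ × ℕ)) : List (ℕ × ℕ) :=
  q ++ (q.sum.2 - q.sum.1 + (r.sum.2 - r.sum.1), 0) :: r

theorem horizontalJoin_sum {q r : List (ℕ × ℕ)} (hq : q.sum.1 ≤ q.sum.2)
    (hr : r.sum.1 ≤ r.sum.2) :
    (horizontalJoin q r).sum = (q.sum.2 + r.sum.2, q.sum.2 + r.sum.2) := by
  simp only [horizontalJoin, List.sum_append, List.sum_cons, Prod.ext_iff, Prod.fst_add,
    Prod.snd_add]
  omega

theorem node_horizontalJoin {q : List (ℕ × ℕ)} (r : List (ℕ × ℕ)) (hq : q.sum.1 ≤ q.sum.2) :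
    node (horizontalJoin q r) (q.length + 1) = (q.sum.2 + (r.sum.2 - r.sum.1), q.sum.2) := by
  rw [horizontalJoin, node_append_cons, Prod.ext_iff, Prod.fst_add, Prod.snd_add]
  omega

theorem horizontalJoin_mem (hhoriz : ∀ a : ℕ, 1 ≤ a → (a, 0) ∈ S) {q r : List (ℕ × ℕ)}
    (hq : ∀ s ∈ q, s ∈ S) (hr : ∀ s ∈ r, s ∈ S)
    (hpos : 0 < q.sum.2 - q.sum.1 + (r.sum.2 - r.sum.1)) : ∀ s ∈ horizontalJoin q r, s ∈ S := by
  simp only [horizontalJoin, List.forall_mem_append, List.forall_mem_cons]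
  exact ⟨hq, hhoriz _ hpos, hr⟩

theorem prod_map_horizontalJoin {A : Type*} [CommRing A] {w : ℕ × ℕ → A} {ρ : A}
    (hw : ∀ a : ℕ, 1 ≤ a → w (a, 0) = ρ) {q r : List (ℕ × ℕ)}
    (hpos : 0 < q.sum.2 - q.sum.1 + (r.sum.2 - r.sum.1)) :
    ((horizontalJoin q r).map w).prod = ρ * (q.map w).prod * (r.map w).prod := by
  simp only [horizontalJoin, List.map_append, List.map_cons, List.prod_append, List.prod_cons,
    hw _ hpos]
  ring

theorem horizontalJoin_nil_injective : Function.Injective (horizontalJoin · []) :=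
  fun _ _ h => (List.append_inj h (by simpa [horizontalJoin] using congrArg List.length h)).1

/-- A step that goes down relative to the diagonal must be horizontal. -/
theorem eq_horizontalJoin (hslope : ∀ a b : ℕ, (a, b) ∈ S → 0 < b → a ≤ b)
    {q r : List (ℕ × ℕ)} {s : ℕ × ℕ} (hs : s ∈ S) (hlt : s.2 < s.1)
    (hq : q.sum.1 ≤ q.sum.2) (hr : r.sum.1 ≤ r.sum.2)
    (hd : (q ++ s :: r).sum.1 = (q ++ s :: r).sum.2) : q ++ s :: r = horizontalJoin q r := by
  have hs2 : s.2 = 0 := by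
    by_contra h
    have := hslope s.1 s.2 hs (Nat.pos_of_ne_zero h)
    omega
  simp only [List.sum_append, List.sum_cons, Prod.fst_add, Prod.snd_add] at hd
  have hs1 : s.1 = q.sum.2 - q.sum.1 + (r.sum.2 - r.sum.1) := by omega
  rw [horizontalJoin, ← hs1, ← hs2]

end HorizontalJoin

section Decompositions

variable {S : Set (ℕ × ℕ)}

theorem catalanPaths_sdiff_nil :
    catalanPaths S \ {[]} = Set.image2 (· ++ ·) (arches S) (catalanPaths S) := by
  classical
  ext p
  refine ⟨fun ⟨⟨⟨hS, hp⟩, hpd⟩, hne⟩ => ?_, ?_⟩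
  · obtain ⟨τ, hτ0, hτ, hτd, hfirst⟩ : ∃ τ, 0 < τ ∧ τ ≤ p.length ∧
        (node p τ).1 = (node p τ).2 ∧ ∀ j, 0 < j → j < τ → (node p j).1 ≠ (node p j).2 := by
      have hex : ∃ j, 0 < j ∧ j ≤ p.length ∧ (node p j).1 = (node p j).2 :=
        ⟨p.length, List.length_pos_iff.2 hne, le_rfl, by simpa using hpd⟩
      obtain ⟨h0, hle, hd⟩ := Nat.find_spec hex
      exact ⟨_, h0, hle, hd, fun j hj0 hj => fun hd => Nat.find_min hex hj ⟨hj0, by omega, hd⟩⟩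
    obtain ⟨u, r, rfl, rfl⟩ := List.exists_eq_append_of_le_length hτ
    obtain ⟨huS, hrS⟩ := List.forall_mem_append.1 hS
    obtain ⟨hu, hr⟩ := (forall_node_append (P := fun v => v.1 ≤ v.2)).1 hp
    rw [node_append_of_le r le_rfl, node_length] at hτd
    refine ⟨u, ⟨⟨⟨huS, hu⟩, hτd⟩, List.length_pos_iff.1 hτ0, fun j hj0 hj => ?_⟩,
      r, ⟨⟨hrS, fun j hj => ?_⟩, ?_⟩, rfl⟩
    · have := hfirst j hj0 hj
      have := hu j hj.le
      rw [node_append_of_le r hj.le] at *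
      omega
    · have := hr j hj
      simp only [Prod.fst_add, Prod.snd_add] at this
      omega
    · simp only [List.sum_append, Prod.fst_add, Prod.snd_add] at hpd
      omega
  · rintro ⟨u, ⟨⟨hu, hud⟩, hne, -⟩, r, ⟨hr, hrd⟩, rfl⟩
    refine ⟨⟨weaklyAbovePaths_append hu hr, ?_⟩, by simp [hne]⟩
    simp only [List.sum_append, Prod.fst_add, Prod.snd_add]
    omega

theorem length_le_of_append_eq_of_arches {u r u' r' : List (ℕ × ℕ)}
    (hu : u ∈ arches S) (hu' : u' ∈ arches S) (h : u ++ r = u' ++ r') :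
    u.length ≤ u'.length := by
  by_contra! hlt
  have hnode := node_append_of_le r hlt.le
  rw [h, node_append_of_le r' le_rfl, node_length] at hnode
  have := hu.2.2 u'.length (List.length_pos_iff.2 hu'.2.1) hlt
  rw [← hnode] at this
  have := hu'.1.2
  omega

theorem append_inj_of_arches {u r u' r' : List (ℕ × ℕ)}
    (hu : u ∈ arches S) (hu' : u' ∈ arches S) (h : u ++ r = u' ++ r') : u = u' ∧ r = r' :=
  List.append_inj h (le_antisymm (length_le_of_append_eq_of_arches hu hu' h)
    (length_le_of_append_eq_of_arches hu' hu h.symm))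

theorem diagonalSteps_subset_arches : diagonalSteps S ⊆ arches S := by
  rintro _ ⟨a, ha, rfl⟩
  refine ⟨⟨⟨by simpa using ha, fun j hj => ?_⟩, by simp⟩, by simp, fun j hj0 hj => ?_⟩
  · simp only [List.length_singleton] at hj
    interval_cases j <;> simp [node]
  · simp at hj
    omega

theorem horizontalJoin_nil_mem_arches (hhoriz : ∀ a : ℕ, 1 ≤ a → (a, 0) ∈ S)
    {v : List (ℕ × ℕ)} (hv : v ∈ strictlyAbovePaths S) (hv0 : v ≠ []) :
    horizontalJoin v [] ∈ arches S := by
  have hvsum := sum_lt_of_mem_strictlyAbovePaths hv hv0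
  have hlen : (horizontalJoin v []).length = v.length + 1 := by simp [horizontalJoin]
  have hint : ∀ j, 0 < j → j ≤ v.length →
      (node (horizontalJoin v []) j).1 < (node (horizontalJoin v []) j).2 := fun j hj0 hj => by
    rw [horizontalJoin, node_append_of_le _ hj]
    exact hv.2 j hj0 hj
  refine ⟨⟨⟨horizontalJoin_mem hhoriz hv.1 (by simp) (by simp; omega), fun j hj => ?_⟩,
    by rw [horizontalJoin_sum hvsum.le le_rfl]⟩, by simp [horizontalJoin],
    fun j hj0 hj => hint j hj0 (by omega)⟩
  rcases j.eq_zero_or_pos with rfl | hj0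
  · simp
  rcases Nat.lt_or_ge j (v.length + 1) with hj' | hj'
  · exact (hint j hj0 (by omega)).le
  · rw [node_of_length_le (by omega), horizontalJoin_sum hvsum.le le_rfl]

theorem arches_eq (hhoriz : ∀ a : ℕ, 1 ≤ a → (a, 0) ∈ S)
    (hslope : ∀ a b : ℕ, (a, b) ∈ S → 0 < b → a ≤ b) :
    arches S = diagonalSteps S ∪ (horizontalJoin · []) '' (strictlyAbovePaths S \ {[]}) := by
  refine Set.Subset.antisymm (fun p ⟨⟨⟨hS, _⟩, hd⟩, hne, hint⟩ => ?_)
    (Set.union_subset diagonalSteps_subset_arches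
      (Set.image_subset_iff.2 fun v hv => horizontalJoin_nil_mem_arches hhoriz hv.1 hv.2))
  obtain ⟨v, s, r, rfl, hv⟩ := List.exists_eq_append_cons_of_lt_length
    (show p.length - 1 < p.length by simp [List.length_pos_iff, hne])
  obtain rfl : r = [] := List.eq_nil_of_length_eq_zero (by
    simp only [List.length_append, List.length_cons] at hv; omega)
  obtain ⟨hvS, hsS⟩ : (∀ t ∈ v, t ∈ S) ∧ s ∈ S := by
    simpa only [List.forall_mem_append, List.forall_mem_singleton] using hS
  rcases eq_or_ne v [] with rfl | hv0
  · obtain ⟨a, b⟩ := s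
    obtain rfl : a = b := by simpa using hd
    exact Or.inl ⟨a, hsS, rfl⟩
  · have hvs : ∀ j, 0 < j → j ≤ v.length → (node v j).1 < (node v j).2 := fun j hj0 hj => by
      simpa [node_append_of_le _ hj] using hint j hj0 (by simp; omega)
    have hvsum : v.sum.1 < v.sum.2 := by
      simpa using hvs v.length (List.length_pos_iff.2 hv0) le_rfl
    have hsum : (v ++ [s]).sum.1 = (v ++ [s]).sum.2 := hd
    simp only [List.sum_append, List.sum_cons, List.sum_nil, add_zero, Prod.fst_add,
      Prod.snd_add] at hd
    exact Or.inr ⟨v, ⟨⟨hvS, hvs⟩, hv0⟩,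
      (eq_horizontalJoin hslope hsS (by omega) hvsum.le le_rfl hsum).symm⟩

theorem weaklyAbovePaths_eq_image2 :
    weaklyAbovePaths S = Set.image2 (· ++ ·) (catalanPaths S) (strictlyAbovePaths S) := by
  classical
  ext p
  refine ⟨fun hp => ?_, ?_⟩
  · obtain ⟨c, hcle, hc, hlast⟩ : ∃ c ≤ p.length, (node p c).1 = (node p c).2 ∧
        ∀ k, c < k → k ≤ p.length → (node p k).1 ≠ (node p k).2 :=
      ⟨_, Nat.findGreatest_le _, Nat.findGreatest_spec (P := fun j => (node p j).1 = (node p j).2)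
        (Nat.zero_le _) (by simp), fun _ => Nat.findGreatest_is_greatest⟩
    obtain ⟨q, u, rfl, rfl⟩ := List.exists_eq_append_of_le_length hcle
    obtain ⟨hqS, huS⟩ := List.forall_mem_append.1 hp.1
    obtain ⟨hq, hu⟩ := (forall_node_append (P := fun v => v.1 ≤ v.2)).1 hp.2
    rw [node_append_of_le u le_rfl, node_length] at hc
    refine ⟨q, ⟨⟨hqS, hq⟩, hc⟩, u, ⟨huS, fun j hj0 hj => ?_⟩, rfl⟩
    have hne := hlast (q.length + j) (by omega) (by simp; omega)
    rw [node_append_add] at hne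
    have := hu j hj
    simp only [Prod.fst_add, Prod.snd_add] at hne this
    omega
  · rintro ⟨q, hq, u, hu, rfl⟩
    exact weaklyAbovePaths_append hq.1 (strictlyAbovePaths_subset hu)

theorem length_le_of_append_eq_of_catalanPaths {q u q' u' : List (ℕ × ℕ)}
    (hq : q ∈ catalanPaths S) (hu : u ∈ strictlyAbovePaths S) (hq' : q' ∈ catalanPaths S)
    (h : q ++ u = q' ++ u') : q'.length ≤ q.length := by
  by_contra! hlt
  obtain ⟨k, hk⟩ := Nat.exists_eq_add_of_lt hlt
  have hlen := congrArg List.length h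
  have hnode := node_append_add q u (k + 1)
  rw [h, ← add_assoc, ← hk, node_append_of_le u' le_rfl, node_length] at hnode
  have := hu.2 (k + 1) k.succ_pos (by simp at hlen; omega)
  have := hq.2
  have := hq'.2
  simp only [hnode, Prod.fst_add, Prod.snd_add] at *
  omega

theorem append_inj_of_catalanPaths {q u q' u' : List (ℕ × ℕ)}
    (hq : q ∈ catalanPaths S) (hu : u ∈ strictlyAbovePaths S) (hq' : q' ∈ catalanPaths S)
    (hu' : u' ∈ strictlyAbovePaths S) (h : q ++ u = q' ++ u') : q = q' ∧ u = u' :=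
  List.append_inj h (le_antisymm (length_le_of_append_eq_of_catalanPaths hq' hu' hq h.symm)
    (length_le_of_append_eq_of_catalanPaths hq hu hq' h))

theorem diagonalEndPaths_sdiff_catalanPaths (hhoriz : ∀ a : ℕ, 1 ≤ a → (a, 0) ∈ S)
    (hslope : ∀ a b : ℕ, (a, b) ∈ S → 0 < b → a ≤ b) :
    diagonalEndPaths S \ catalanPaths S =
      Set.image2 horizontalJoin (weaklyAbovePaths S) (aboveEndPaths S) := by
  classical
  ext p
  refine ⟨fun ⟨⟨hS, hd⟩, hnot⟩ => ?_, ?_⟩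
  · obtain ⟨τ, hτ, hτb, hfirst⟩ : ∃ τ ≤ p.length, (node p τ).2 < (node p τ).1 ∧
        ∀ j < τ, (node p j).1 ≤ (node p j).2 := by
      have hex : ∃ j ≤ p.length, (node p j).2 < (node p j).1 := by
        by_contra! h
        exact hnot ⟨⟨hS, h⟩, hd⟩
      obtain ⟨hle, hb⟩ := Nat.find_spec hex
      exact ⟨_, hle, hb, fun j hj => not_lt.1 fun hb => Nat.find_min hex hj ⟨by omega, hb⟩⟩
    have hτ0 : τ ≠ 0 := by rintro rfl; simp at hτb
    obtain ⟨q, s, r, rfl, hqτ⟩ :=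
      List.exists_eq_append_cons_of_lt_length (show τ - 1 < p.length by omega)
    obtain ⟨hqS, hsS, hrS⟩ : (∀ t ∈ q, t ∈ S) ∧ s ∈ S ∧ ∀ t ∈ r, t ∈ S := by
      simpa only [List.forall_mem_append, List.forall_mem_cons] using hS
    have hq : ∀ j ≤ q.length, (node q j).1 ≤ (node q j).2 := fun j hj => by
      simpa [node_append_of_le _ hj] using hfirst j (by omega)
    have hqsum := hq q.length le_rfl
    rw [show τ = q.length + 1 by omega, node_append_cons] at hτb
    simp only [node_length, Prod.fst_add, Prod.snd_add] at hqsum hτb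
    have hrsum : r.sum.1 < r.sum.2 := by
      simp only [List.sum_append, List.sum_cons, Prod.fst_add, Prod.snd_add] at hd
      omega
    exact ⟨q, ⟨hqS, hq⟩, r, ⟨hrS, hrsum⟩,
      (eq_horizontalJoin hslope hsS (by omega) hqsum hrsum.le hd).symm⟩
  · rintro ⟨q, ⟨hqS, hq⟩, r, ⟨hrS, hr⟩, rfl⟩
    have hqsum : q.sum.1 ≤ q.sum.2 := by simpa using hq q.length le_rfl
    refine ⟨⟨horizontalJoin_mem hhoriz hqS hrS (by omega), by
      rw [horizontalJoin_sum hqsum hr.le]⟩, fun hcat => ?_⟩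
    have := hcat.1.2 (q.length + 1) (by simp [horizontalJoin])
    rw [node_horizontalJoin r hqsum] at this
    omega

theorem length_le_of_horizontalJoin_eq {q r q' r' : List (ℕ × ℕ)}
    (hq : q ∈ weaklyAbovePaths S) (hr : r ∈ aboveEndPaths S) (hq' : q' ∈ weaklyAbovePaths S)
    (h : horizontalJoin q r = horizontalJoin q' r') : q'.length ≤ q.length := by
  by_contra! hlt
  have hqsum : q.sum.1 ≤ q.sum.2 := by simpa using hq.2 q.length le_rfl
  have hnode := node_horizontalJoin r hqsum
  rw [h, horizontalJoin, node_append_of_le _ hlt] at hnode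
  have := hq'.2 (q.length + 1) hlt
  rw [hnode] at this
  have := hr.2
  omega

theorem horizontalJoin_inj {q r q' r' : List (ℕ × ℕ)}
    (hq : q ∈ weaklyAbovePaths S) (hr : r ∈ aboveEndPaths S) (hq' : q' ∈ weaklyAbovePaths S)
    (hr' : r' ∈ aboveEndPaths S) (h : horizontalJoin q r = horizontalJoin q' r') :
    q = q' ∧ r = r' := by
  obtain ⟨rfl, hcons⟩ := List.append_inj h (le_antisymm
    (length_le_of_horizontalJoin_eq hq' hr' hq h.symm) (length_le_of_horizontalJoin_eq hq hr hq' h))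
  exact ⟨rfl, (List.cons.inj hcons).2⟩

end Decompositions

section Identities

variable {S : Set (ℕ × ℕ)} {A : Type*} [CommRing A] {w : ℕ × ℕ → A} {ρ : A}

theorem pathSeries_arches (h00 : (0, 0) ∉ S) (hhoriz : ∀ a : ℕ, 1 ≤ a → (a, 0) ∈ S)
    (hslope : ∀ a b : ℕ, (a, b) ∈ S → 0 < b → a ≤ b) (hw : ∀ a : ℕ, 1 ≤ a → w (a, 0) = ρ) :
    pathSeries w (arches S) = pathSeries w (diagonalSteps S) +
      PowerSeries.C ρ * pathSeries w (strictlyAbovePaths S \ {[]}) := by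
  have hA : LevelFinite (arches S) := (levelFinite_catalanPaths h00).subset (Set.sep_subset _ _)
  have hU : LevelFinite (strictlyAbovePaths S \ {[]}) :=
    (levelFinite_weaklyAbovePaths h00).subset (Set.sdiff_subset.trans strictlyAbovePaths_subset)
  have harches := arches_eq hhoriz hslope
  have hdisj :
      Disjoint (diagonalSteps S) ((horizontalJoin · []) '' (strictlyAbovePaths S \ {[]})) := by
    refine Set.disjoint_left.2 fun _ ⟨a, _, ha⟩ ⟨v, hv, hva⟩ => hv.2 ?_
    simpa [horizontalJoin] using congrArg List.length (hva.trans ha)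
  have hpos : ∀ v ∈ strictlyAbovePaths S \ {[]}, v.sum.1 < v.sum.2 :=
    fun v hv => sum_lt_of_mem_strictlyAbovePaths hv.1 hv.2
  rw [harches, pathSeries_union w (hA.subset (harches ▸ Set.subset_union_left))
      (hA.subset (harches ▸ Set.subset_union_right)) hdisj,
    pathSeries_image w hU _ ρ (fun _ _ _ _ h => horizontalJoin_nil_injective h)
      (fun v hv => by rw [horizontalJoin_sum (hpos v hv).le le_rfl]; simp)
      (fun v hv => by
        rw [prod_map_horizontalJoin hw (by have := hpos v hv; omega), List.map_nil,
          List.prod_nil, mul_one])]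

theorem pathSeries_catalanPaths (h00 : (0, 0) ∉ S) :
    pathSeries w (catalanPaths S) =
      1 + pathSeries w (arches S) * pathSeries w (catalanPaths S) := by
  have hP := levelFinite_catalanPaths h00
  have hfirst_return := pathSeries_image2 w (X := arches S) (hP.subset (Set.sep_subset _ _)) hP
    (· ++ ·) 1
    (fun _ hu _ _ _ hu' _ _ h => append_inj_of_arches hu hu' h) (by simp) (by simp)
  rw [map_one, one_mul, ← catalanPaths_sdiff_nil] at hfirst_return
  rw [← hfirst_return]
  exact pathSeries_eq_one_add w hP ⟨⟨by simp, by simp⟩, rfl⟩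

theorem pathSeries_weaklyAbovePaths (h00 : (0, 0) ∉ S) :
    pathSeries w (weaklyAbovePaths S) =
      pathSeries w (catalanPaths S) * (1 + pathSeries w (strictlyAbovePaths S \ {[]})) := by
  have hU : LevelFinite (strictlyAbovePaths S) :=
    (levelFinite_weaklyAbovePaths h00).subset strictlyAbovePaths_subset
  rw [weaklyAbovePaths_eq_image2, pathSeries_image2 w (levelFinite_catalanPaths h00) hU (· ++ ·) 1
      (fun _ hq _ hu _ hq' _ hu' h => append_inj_of_catalanPaths hq hu hq' hu' h) (by simp)
      (by simp),
    map_one, one_mul, pathSeries_eq_one_add w hU nil_mem_strictlyAbovePaths]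

theorem pathSeries_diagonalEndPaths (h00 : (0, 0) ∉ S) (hhoriz : ∀ a : ℕ, 1 ≤ a → (a, 0) ∈ S)
    (hslope : ∀ a b : ℕ, (a, b) ∈ S → 0 < b → a ≤ b) (hw : ∀ a : ℕ, 1 ≤ a → w (a, 0) = ρ) :
    pathSeries w (diagonalEndPaths S) = pathSeries w (catalanPaths S) +
      PowerSeries.C ρ * pathSeries w (weaklyAbovePaths S) * pathSeries w (aboveEndPaths S) := by
  have hPD : catalanPaths S ⊆ diagonalEndPaths S := fun p hp => ⟨hp.1.1, hp.2⟩
  have hD := levelFinite_diagonalEndPaths h00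
  rw [← Set.union_sdiff_cancel hPD, pathSeries_union w (hD.subset hPD)
      (hD.subset Set.sdiff_subset) Set.disjoint_sdiff_right,
    diagonalEndPaths_sdiff_catalanPaths hhoriz hslope,
    pathSeries_image2 w (levelFinite_weaklyAbovePaths h00) (levelFinite_aboveEndPaths h00)
      horizontalJoin ρ (fun _ hq _ hr _ hq' _ hr' h => horizontalJoin_inj hq hr hq' hr' h)]
  · intro q hq r hr
    rw [horizontalJoin_sum (by simpa using hq.2 q.length le_rfl) hr.2.le]
  · intro q _ r hr
    exact prod_map_horizontalJoin hw (by have := hr.2; omega)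

end Identities

section Coefficients

variable {S : Set (ℕ × ℕ)} {A : Type*} [CommRing A] (w : ℕ × ℕ → A)

theorem mk_finsum_isPath_isCatalan :
    (PowerSeries.mk fun n =>
      ∑ᶠ p ∈ {p : List (ℕ × ℕ) | IsPath S n n p ∧ IsCatalan p}, (p.map w).prod) =
      pathSeries w (catalanPaths S) := by
  ext n
  rw [pathSeries, PowerSeries.coeff_mk, PowerSeries.coeff_mk]
  congr! 3 with p
  simp only [level, catalanPaths, weaklyAbovePaths, isPath_iff, isCatalan_iff, Prod.ext_iff,
    Set.mem_ofPred_eq]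
  grind

theorem mk_sum_range_succ_finsum_isPath :
    (PowerSeries.mk fun n => ∑ j ∈ Finset.range (n + 1),
      ∑ᶠ p ∈ {p : List (ℕ × ℕ) | IsPath S j n p}, (p.map w).prod) =
    (PowerSeries.mk fun n => ∑ j ∈ Finset.range n,
      ∑ᶠ p ∈ {p : List (ℕ × ℕ) | IsPath S j n p}, (p.map w).prod) +
      pathSeries w (diagonalEndPaths S) := by
  ext n
  rw [map_add, pathSeries, PowerSeries.coeff_mk, PowerSeries.coeff_mk, PowerSeries.coeff_mk,
    Finset.sum_range_succ]
  congr! 4 with p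
  simp only [level, diagonalEndPaths, isPath_iff, Prod.ext_iff, Set.mem_ofPred_eq]
  grind

theorem mk_sum_range_finsum_isPath (h00 : (0, 0) ∉ S) :
    (PowerSeries.mk fun n => ∑ j ∈ Finset.range n,
      ∑ᶠ p ∈ {p : List (ℕ × ℕ) | IsPath S j n p}, (p.map w).prod) =
      pathSeries w (aboveEndPaths S) := by
  ext n
  rw [pathSeries, PowerSeries.coeff_mk, PowerSeries.coeff_mk]
  have hlevel : level (aboveEndPaths S) n =
      ⋃ j ∈ (Finset.range n : Set ℕ), {p | IsPath S j n p} := by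
    ext p
    simp only [level, aboveEndPaths, isPath_iff, Prod.ext_iff, Set.mem_ofPred_eq,
      Set.mem_iUnion, Finset.coe_range, Set.mem_Iio]
    grind
  have hfin := levelFinite_aboveEndPaths h00 n
  rw [hlevel] at hfin ⊢
  rw [finsum_mem_biUnion _ (Finset.finite_toSet _)
    fun j hj => hfin.subset (Set.subset_biUnion_of_mem (u := fun j => {p | IsPath S j n p}) hj),
    finsum_mem_coe_finset]
  exact fun j _ j' _ hne => Set.disjoint_left.2 fun p hp hp' =>
    hne (Prod.mk.inj ((isPath_iff.1 hp).2.symm.trans (isPath_iff.1 hp').2)).1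

open Classical in
theorem pathSeries_diagonalSteps (h00 : (0, 0) ∉ S) :
    pathSeries w (diagonalSteps S) =
      PowerSeries.mk fun a => if 1 ≤ a ∧ (a, a) ∈ S then w (a, a) else 0 := by
  ext a
  rw [pathSeries, PowerSeries.coeff_mk, PowerSeries.coeff_mk]
  split_ifs with ha
  · have : level (diagonalSteps S) a = {[(a, a)]} := by
      ext p
      simp only [level, diagonalSteps, Set.mem_ofPred_eq, Set.mem_singleton_iff]
      constructor
      · rintro ⟨⟨b, -, rfl⟩, rfl⟩
        simp
      · rintro rfl
        exact ⟨⟨a, ha.2, rfl⟩, by simp⟩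
    simp [this]
  · have : level (diagonalSteps S) a = ∅ := by
      ext p
      simp only [level, diagonalSteps, Set.mem_ofPred_eq, Set.mem_empty_iff_false, iff_false]
      rintro ⟨⟨b, hb, rfl⟩, hba⟩
      obtain rfl : b = a := by simpa using hba
      exact ha ⟨Nat.one_le_iff_ne_zero.2 (by rintro rfl; exact h00 hb), hb⟩
    simp [this]

end Coefficients

end LatticePath

open Classical in
theorem stmt14 (A : Type*) [CommRing A]
    (S : Set (ℕ × ℕ)) (h00 : (0, 0) ∉ S)
    (hhoriz : ∀ a : ℕ, 1 ≤ a → (a, 0) ∈ S)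
    (hslope : ∀ a b : ℕ, (a, b) ∈ S → 0 < b → a ≤ b)
    (w : ℕ × ℕ → A) (ρ : A) (hw : ∀ a : ℕ, 1 ≤ a → w (a, 0) = ρ)
    (Pw Tw E0w E1w : PowerSeries A)
    (hP : Pw = PowerSeries.mk fun n =>
      ∑ᶠ p ∈ {p : List (ℕ × ℕ) | IsPath S n n p ∧ IsCatalan p}, (p.map w).prod)
    (hT : Tw = PowerSeries.mk fun a => if 1 ≤ a ∧ (a, a) ∈ S then w (a, a) else 0)
    (hE0 : E0w = PowerSeries.mk fun n => ∑ j ∈ Finset.range (n + 1),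
      ∑ᶠ p ∈ {p : List (ℕ × ℕ) | IsPath S j n p}, (p.map w).prod)
    (hE1 : E1w = PowerSeries.mk fun n => ∑ j ∈ Finset.range n,
      ∑ᶠ p ∈ {p : List (ℕ × ℕ) | IsPath S j n p}, (p.map w).prod) :
    Pw * (1 + (1 + PowerSeries.C (R := A) ρ - Tw) * E1w) = E0w := by
  open LatticePath in
  rw [mk_finsum_isPath_isCatalan] at hP
  rw [← pathSeries_diagonalSteps w h00] at hT
  rw [mk_sum_range_succ_finsum_isPath, ← hE1] at hE0
  rw [mk_sum_range_finsum_isPath w h00] at hE1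
  have first_return := pathSeries_catalanPaths (w := w) h00
  rw [pathSeries_arches h00 hhoriz hslope hw] at first_return
  subst hP hT hE0 hE1
  rw [pathSeries_diagonalEndPaths h00 hhoriz hslope hw, pathSeries_weaklyAbovePaths h00]
  linear_combination pathSeries w (aboveEndPaths S) * first_return
end

section
/- Let S = {(a,0) : a ≥ 1} ∪ {(0,a) : a ≥ 1} be the set of rook steps. Work in the ring ℚ[ρ,ν] of polynomials in two variables, and for n ≥ 0 let p^w_n = Σ_π ρ^{h(π)} ν^{v(π)}, where the sum is over all Catalan S-paths π from (0,0) to (n,n), h(π) is the number of horizontal steps (a,0) of π and v(π) is the number of vertical steps (0,a) of π. Let P^w(t) = Σ_{n≥0} p^w_n tⁿ ∈ (ℚ[ρ,ν])⟦t⟧. Then β = (1+ρ)·P^w(t) satisfies the quadratic equation (1+ν)t·β² − (1 + (1+ρ+ν)t)·β + (1+ρ) = 0 in (ℚ[ρ,ν])⟦t⟧. -/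
/-- The set of rook steps: proper horizontal and vertical steps. -/
def rookSteps : Set (ℕ × ℕ) :=
  {st | (∃ a : ℕ, 1 ≤ a ∧ st = (a, 0)) ∨ (∃ a : ℕ, 1 ≤ a ∧ st = (0, a))}

/-- Enumerator of Catalan rook paths to `(n,n)` by numbers of horizontal and
vertical steps: `Σ_π ρ^{h(π)} ν^{v(π)}` in `ℚ[ρ,ν]`, where `ρ = X 0`, `ν = X 1`. -/
noncomputable def pRookW (n : ℕ) : MvPolynomial (Fin 2) ℚ :=
  ∑ᶠ p ∈ {p : List (ℕ × ℕ) | IsPath rookSteps n n p ∧ IsCatalan p},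
    (MvPolynomial.X 0 : MvPolynomial (Fin 2) ℚ) ^ (p.countP fun st => st.2 == 0) *
    (MvPolynomial.X 1 : MvPolynomial (Fin 2) ℚ) ^ (p.countP fun st => st.1 == 0)

/-!
A Catalan rook path to `(n + 1, n + 1)` splits uniquely, at its first return to the diagonal,
into a primitive path (one that meets the diagonal only at its ends) followed by a Catalan path.
Hence `P = 1 + t Q P`, where `Q = Σ_k q_{k+1} t^k` and `q_k` enumerates the primitive paths to
`(k, k)`. The only primitive path to `(1, 1)` is `(0,1)(1,0)`, of weight `ρν`. The primitive paths
to `(k + 2, k + 2)` are obtained, each exactly once, from the Catalan paths to `(k + 1, k + 1)` by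
adding a vertical unit at the start and a horizontal unit at the end, each either as a new unit
step or by lengthening the first (vertical), resp. last (horizontal), step; this contributes the
factor `(1 + ν)(1 + ρ)`. So `Q = (1 + ρ)(1 + ν) P - (1 + ρ + ν)`, and `P = 1 + t Q P` becomes the
quadratic equation for `β = (1 + ρ) P`.
-/

theorem Finset.sum_eq_one_add_mul_sum_of_bool {ι κ R : Type*} [CommSemiring R] {s : Finset ι}
    {t : Finset κ} {w : ι → R} {v : κ → R} (c : R) (g : Bool → ι → κ)
    (hmaps : ∀ e, ∀ x ∈ s, g e x ∈ t)
    (hinj : ∀ e x e' x', x ∈ s → x' ∈ s → g e x = g e' x' → e = e' ∧ x = x')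
    (hsurj : ∀ y ∈ t, ∃ e x, x ∈ s ∧ g e x = y)
    (hw : ∀ e, ∀ x ∈ s, v (g e x) = (if e then c else 1) * w x) :
    ∑ y ∈ t, v y = (1 + c) * ∑ x ∈ s, w x := by
  have : ∑ ex ∈ (Finset.univ : Finset Bool) ×ˢ s, (if ex.1 then c else 1) * w ex.2 =
      ∑ y ∈ t, v y := by
    refine Finset.sum_nbij (fun ex => g ex.1 ex.2) ?_ ?_ ?_ ?_
    · intro ex hex
      exact hmaps ex.1 ex.2 (Finset.mem_product.mp hex).2
    · intro ex hex ex' hex' h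
      obtain ⟨h1, h2⟩ := hinj _ _ _ _ (Finset.mem_product.mp hex).2 (Finset.mem_product.mp hex').2 h
      exact Prod.ext h1 h2
    · intro y hy
      obtain ⟨e, x, hx, rfl⟩ := hsurj y hy
      exact ⟨(e, x), Finset.mem_product.mpr ⟨Finset.mem_univ e, hx⟩, rfl⟩
    · intro ex hex
      exact (hw ex.1 ex.2 (Finset.mem_product.mp hex).2).symm
  rw [← this, Finset.sum_product, Fintype.sum_bool]
  simp only [if_true, Bool.false_eq_true, if_false, one_mul, ← Finset.mul_sum]
  ring

open Finset in
theorem PowerSeries.mk_eq_one_add_X_mul_mk_mul {R : Type*} [Semiring R] {f g : ℕ → R}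
    (h0 : f 0 = 1) (hsucc : ∀ n, f (n + 1) = ∑ ij ∈ antidiagonal n, g ij.1 * f ij.2) :
    mk f = 1 + X * mk g * mk f := by
  ext n
  cases n with
  | zero => simp [h0]
  | succ n =>
    rw [coeff_mk, hsucc, map_add, coeff_one, if_neg n.succ_ne_zero, mul_assoc, coeff_succ_X_mul,
      coeff_mul, zero_add]
    simp only [coeff_mk]

namespace RookPath

open Finset

local notation "ρ" => (MvPolynomial.X 0 : MvPolynomial (Fin 2) ℚ)
local notation "ν" => (MvPolynomial.X 1 : MvPolynomial (Fin 2) ℚ)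

def xSum (p : List (ℕ × ℕ)) : ℕ := (p.map Prod.fst).sum

def ySum (p : List (ℕ × ℕ)) : ℕ := (p.map Prod.snd).sum

@[simp] theorem xSum_nil : xSum [] = 0 := rfl
@[simp] theorem ySum_nil : ySum [] = 0 := rfl
@[simp] theorem xSum_cons (s : ℕ × ℕ) (p : List (ℕ × ℕ)) : xSum (s :: p) = s.1 + xSum p := rfl
@[simp] theorem ySum_cons (s : ℕ × ℕ) (p : List (ℕ × ℕ)) : ySum (s :: p) = s.2 + ySum p := rfl

@[simp] theorem xSum_append (p q : List (ℕ × ℕ)) : xSum (p ++ q) = xSum p + xSum q := by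
  simp [xSum]

@[simp] theorem ySum_append (p q : List (ℕ × ℕ)) : ySum (p ++ q) = ySum p + ySum q := by
  simp [ySum]

theorem mem_rookSteps_iff {s : ℕ × ℕ} :
    s ∈ rookSteps ↔ (1 ≤ s.1 ∧ s.2 = 0) ∨ (s.1 = 0 ∧ 1 ≤ s.2) := by
  obtain ⟨a, b⟩ := s
  simp only [rookSteps, Set.mem_ofPred_eq, Prod.mk.injEq]
  constructor
  · rintro (⟨a, ha, rfl, rfl⟩ | ⟨b, hb, rfl, rfl⟩)
    exacts [Or.inl ⟨ha, rfl⟩, Or.inr ⟨rfl, hb⟩]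
  · rintro (⟨ha, rfl⟩ | ⟨rfl, hb⟩)
    exacts [Or.inl ⟨a, ha, rfl, rfl⟩, Or.inr ⟨b, hb, rfl, rfl⟩]

theorem zero_notMem_rookSteps : ((0, 0) : ℕ × ℕ) ∉ rookSteps := by
  simp [mem_rookSteps_iff]

theorem vertical_mem_rookSteps (a : ℕ) : ((0, a + 1) : ℕ × ℕ) ∈ rookSteps :=
  mem_rookSteps_iff.mpr (Or.inr ⟨rfl, by simp⟩)

theorem horizontal_mem_rookSteps (b : ℕ) : ((b + 1, 0) : ℕ × ℕ) ∈ rookSteps :=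
  mem_rookSteps_iff.mpr (Or.inl ⟨by simp, rfl⟩)

def IsRook (p : List (ℕ × ℕ)) : Prop := ∀ s ∈ p, s ∈ rookSteps

@[simp] theorem isRook_nil : IsRook [] := by simp [IsRook]

@[simp] theorem isRook_cons {s : ℕ × ℕ} {p : List (ℕ × ℕ)} :
    IsRook (s :: p) ↔ s ∈ rookSteps ∧ IsRook p := by
  simp [IsRook]

@[simp] theorem isRook_append {p q : List (ℕ × ℕ)} : IsRook (p ++ q) ↔ IsRook p ∧ IsRook q := by
  simp only [IsRook, List.mem_append]
  grind

theorem IsRook.eq_nil {p : List (ℕ × ℕ)} (hp : IsRook p) (hx : xSum p = 0) (hy : ySum p = 0) :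
    p = [] := by
  cases p with
  | nil => rfl
  | cons s p =>
    rw [isRook_cons, mem_rookSteps_iff] at hp
    simp only [xSum_cons, ySum_cons] at hx hy
    omega

def StaysAbove (h : ℕ) (p : List (ℕ × ℕ)) : Prop := ∀ q, q <+: p → xSum q ≤ ySum q + h

theorem staysAbove_nil (h : ℕ) : StaysAbove h [] := by
  intro q hq
  simp [List.prefix_nil.mp hq]

def IsCatalanPath (n : ℕ) (p : List (ℕ × ℕ)) : Prop :=
  IsRook p ∧ xSum p = n ∧ ySum p = n ∧ StaysAbove 0 p

def IsPrimitive (n : ℕ) (p : List (ℕ × ℕ)) : Prop :=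
  IsCatalanPath n p ∧ p ≠ [] ∧ ∀ q, q <+: p → q ≠ [] → q ≠ p → xSum q < ySum q

/-- Rook paths to `(n + 1, n - h)` that cross the line `x = y + h` only with their last step. -/
def IsCrossing (h n : ℕ) (p : List (ℕ × ℕ)) : Prop :=
  IsRook p ∧ xSum p = n + 1 ∧ ySum p + h = n ∧ ∀ q, q <+: p → q ≠ p → xSum q ≤ ySum q + h

theorem isPath_iff {S : Set (ℕ × ℕ)} {n m : ℕ} {p : List (ℕ × ℕ)} :
    IsPath S n m p ↔ (∀ s ∈ p, s ∈ S) ∧ xSum p = n ∧ ySum p = m := by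
  simp only [IsPath, xPart, yPart, List.take_length]
  rfl

theorem isCatalan_iff {p : List (ℕ × ℕ)} : IsCatalan p ↔ StaysAbove 0 p := by
  refine ⟨fun h q hq => ?_, fun h j _ => h _ (List.take_prefix j p)⟩
  rw [List.prefix_iff_eq_take.mp hq]
  exact h _ hq.length_le

theorem isPath_and_isCatalan_iff {n : ℕ} {p : List (ℕ × ℕ)} :
    IsPath rookSteps n n p ∧ IsCatalan p ↔ IsCatalanPath n p := by
  rw [isPath_iff, isCatalan_iff, IsCatalanPath, IsRook, and_assoc, and_assoc]

theorem length_le_xSum_add_ySum {p : List (ℕ × ℕ)} (hp : ∀ s ∈ p, s ≠ (0, 0)) :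
    p.length ≤ xSum p + ySum p := by
  induction p with
  | nil => simp
  | cons s p ih =>
    simp only [List.mem_cons, forall_eq_or_imp] at hp
    have := ih hp.2
    have : s.1 ≠ 0 ∨ s.2 ≠ 0 := by
      by_contra! h
      exact hp.1 (Prod.ext h.1 h.2)
    simp only [List.length_cons, xSum_cons, ySum_cons]
    omega

theorem finite_setOf_isPath {S : Set (ℕ × ℕ)} (hS : (0, 0) ∉ S) (n m : ℕ) :
    {p | IsPath S n m p}.Finite := by
  let box : Set (ℕ × ℕ) := Set.Iic n ×ˢ Set.Iic m
  have : Finite box := ((Set.finite_Iic n).prod (Set.finite_Iic m)).to_subtype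
  refine ((List.finite_length_le box (n + m)).image List.unattach).subset fun p hp => ?_
  obtain ⟨hpS, hx, hy⟩ := isPath_iff.mp hp
  have hbox : ∀ s ∈ p, s ∈ box := fun s hs =>
    ⟨hx ▸ List.le_sum_of_mem (List.mem_map_of_mem (f := Prod.fst) hs),
      hy ▸ List.le_sum_of_mem (List.mem_map_of_mem (f := Prod.snd) hs)⟩
  refine ⟨p.attachWith (· ∈ box) hbox, ?_, List.unattach_attachWith⟩
  have := length_le_xSum_add_ySum fun s hs h0 => hS (h0 ▸ hpS s hs)
  simp only [Set.mem_ofPred_eq, List.length_attachWith]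
  omega

theorem finite_setOf_isCatalanPath (n : ℕ) : {p | IsCatalanPath n p}.Finite :=
  (finite_setOf_isPath zero_notMem_rookSteps n n).subset fun _ hp =>
    (isPath_and_isCatalan_iff.mpr hp).1

noncomputable def catalanPaths (n : ℕ) : Finset (List (ℕ × ℕ)) :=
  (finite_setOf_isCatalanPath n).toFinset

noncomputable def primitivePaths (n : ℕ) : Finset (List (ℕ × ℕ)) :=
  ((finite_setOf_isCatalanPath n).subset fun _ hp => hp.1).toFinset (s := {p | IsPrimitive n p})

noncomputable def crossingPaths (n : ℕ) : Finset (List (ℕ × ℕ)) :=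
  ((finite_setOf_isPath zero_notMem_rookSteps (n + 1) n).subset fun _ hp =>
    isPath_iff.mpr ⟨hp.1, hp.2.1, hp.2.2.1⟩).toFinset (s := {p | IsCrossing 0 n p})

@[simp] theorem mem_catalanPaths {n : ℕ} {p : List (ℕ × ℕ)} :
    p ∈ catalanPaths n ↔ IsCatalanPath n p := by
  simp [catalanPaths]

@[simp] theorem mem_primitivePaths {n : ℕ} {p : List (ℕ × ℕ)} :
    p ∈ primitivePaths n ↔ IsPrimitive n p := by
  simp [primitivePaths]

@[simp] theorem mem_crossingPaths {n : ℕ} {p : List (ℕ × ℕ)} :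
    p ∈ crossingPaths n ↔ IsCrossing 0 n p := by
  simp [crossingPaths]

noncomputable def weight (p : List (ℕ × ℕ)) : MvPolynomial (Fin 2) ℚ :=
  ρ ^ p.countP (fun s => s.2 == 0) * ν ^ p.countP (fun s => s.1 == 0)

theorem weight_append (p q : List (ℕ × ℕ)) : weight (p ++ q) = weight p * weight q := by
  simp only [weight, List.countP_append, pow_add]
  ring

theorem weight_vertical_cons {c : ℕ} (hc : 1 ≤ c) (p : List (ℕ × ℕ)) :
    weight ((0, c) :: p) = ν * weight p := by
  rw [weight, weight, List.countP_cons_of_neg (by simpa using Nat.one_le_iff_ne_zero.mp hc),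
    List.countP_cons_of_pos (by simp), pow_succ]
  ring

theorem weight_concat_horizontal {b : ℕ} (hb : 1 ≤ b) (p : List (ℕ × ℕ)) :
    weight (p ++ [(b, 0)]) = weight p * ρ := by
  have : b ≠ 0 := by omega
  rw [weight_append]
  congr 1
  simp [weight, this]

theorem pRookW_eq_sum (n : ℕ) : pRookW n = ∑ p ∈ catalanPaths n, weight p := by
  have : {p | IsPath rookSteps n n p ∧ IsCatalan p} = (catalanPaths n : Set (List (ℕ × ℕ))) := by
    ext p
    simp [isPath_and_isCatalan_iff]
  rw [pRookW, this, finsum_mem_coe_finset]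
  rfl

theorem catalanPaths_zero : catalanPaths 0 = {[]} := by
  ext p
  simp only [mem_catalanPaths, Finset.mem_singleton]
  refine ⟨fun ⟨hr, hx, hy, _⟩ => hr.eq_nil hx hy, ?_⟩
  rintro rfl
  exact ⟨isRook_nil, rfl, rfl, staysAbove_nil 0⟩

theorem pRookW_zero : pRookW 0 = 1 := by
  simp [pRookW_eq_sum, catalanPaths_zero, weight]

theorem IsCatalanPath.ne_nil {n : ℕ} {p : List (ℕ × ℕ)} (hp : IsCatalanPath (n + 1) p) :
    p ≠ [] := by
  rintro rfl
  simp [IsCatalanPath] at hp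

theorem exists_eq_vertical {s : ℕ × ℕ} (hs : s ∈ rookSteps) (h : s.1 ≤ s.2) :
    ∃ a, s = (0, a + 1) := by
  rw [mem_rookSteps_iff] at hs
  exact ⟨s.2 - 1, Prod.ext (by omega) (by dsimp only; omega)⟩

theorem exists_eq_horizontal {s : ℕ × ℕ} (hs : s ∈ rookSteps) (h : s.2 ≤ s.1) :
    ∃ b, s = (b + 1, 0) := by
  rw [mem_rookSteps_iff] at hs
  exact ⟨s.1 - 1, Prod.ext (by dsimp only; omega) (by omega)⟩

theorem IsCatalanPath.exists_eq_cons {n : ℕ} {p : List (ℕ × ℕ)} (hp : IsCatalanPath n p)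
    (hne : p ≠ []) : ∃ a t, p = (0, a + 1) :: t := by
  obtain ⟨s, t, rfl⟩ := List.exists_cons_of_ne_nil hne
  have hs := hp.2.2.2 [s] (by simp)
  simp only [xSum_cons, xSum_nil, ySum_cons, ySum_nil] at hs
  obtain ⟨a, rfl⟩ := exists_eq_vertical (isRook_cons.mp hp.1).1 (by omega)
  exact ⟨a, t, rfl⟩

theorem IsCatalanPath.exists_eq_concat {n : ℕ} {p : List (ℕ × ℕ)} (hp : IsCatalanPath (n + 1) p) :
    ∃ r b, p = r ++ [(b + 1, 0)] := by
  obtain ⟨r, s, rfl⟩ := (List.eq_nil_or_concat' p).resolve_left hp.ne_nil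
  obtain ⟨hr, hx, hy, hd⟩ := hp
  have := hd r (List.prefix_append r [s])
  simp only [xSum_append, ySum_append, xSum_cons, ySum_cons, xSum_nil, ySum_nil] at hx hy
  obtain ⟨b, rfl⟩ := exists_eq_horizontal ((isRook_append.mp hr).2 s (by simp)) (by omega)
  exact ⟨r, b, rfl⟩

theorem IsCrossing.exists_eq_cons {n : ℕ} {p : List (ℕ × ℕ)} (hp : IsCrossing 0 (n + 1) p) :
    ∃ c t, p = (0, c + 1) :: t := by
  obtain ⟨hr, hx, hy, hd⟩ := hp
  cases p with
  | nil => simp at hx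
  | cons s t =>
    rcases eq_or_ne t [] with rfl | ht
    · rw [isRook_cons, mem_rookSteps_iff] at hr
      simp only [xSum_cons, xSum_nil, ySum_cons, ySum_nil] at hx hy
      omega
    · have hs := hd [s] (by simp) (by simpa using ht.symm)
      simp only [xSum_cons, xSum_nil, ySum_cons, ySum_nil] at hs
      obtain ⟨c, rfl⟩ := exists_eq_vertical (isRook_cons.mp hr).1 (by omega)
      exact ⟨c, t, rfl⟩

theorem IsCrossing.exists_eq_concat {h n : ℕ} {p : List (ℕ × ℕ)} (hp : IsCrossing h n p) :
    ∃ r b, p = r ++ [(b + 1, 0)] := by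
  obtain ⟨hr, hx, hy, hd⟩ := hp
  obtain ⟨r, s, rfl⟩ := (List.eq_nil_or_concat' p).resolve_left (by rintro rfl; simp at hx)
  have := hd r (List.prefix_append r [s]) (by simp)
  simp only [xSum_append, ySum_append, xSum_cons, ySum_cons, xSum_nil, ySum_nil] at hx hy
  obtain ⟨b, rfl⟩ := exists_eq_horizontal ((isRook_append.mp hr).2 s (by simp)) (by omega)
  exact ⟨r, b, rfl⟩

theorem isPrimitive_cons_iff {n a : ℕ} {t : List (ℕ × ℕ)} :
    IsPrimitive (n + 1) ((0, a + 1) :: t) ↔ IsCrossing a n t := by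
  constructor
  · rintro ⟨⟨hr, hx, hy, -⟩, -, hlt⟩
    refine ⟨(isRook_cons.mp hr).2, by simpa using hx, by simp only [ySum_cons] at hy; omega,
      fun q hq hne => ?_⟩
    have := hlt _ (List.cons_prefix_cons.mpr ⟨rfl, hq⟩) (by simp) (by simpa using hne)
    simp only [xSum_cons, ySum_cons] at this
    omega
  · rintro ⟨hr, hx, hy, hd⟩
    refine ⟨⟨isRook_cons.mpr ⟨vertical_mem_rookSteps a, hr⟩, by simpa using hx,
      by simp only [ySum_cons]; omega, fun q hq => ?_⟩, by simp, fun q hq hne hne' => ?_⟩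
    · rcases List.prefix_cons_iff.mp hq with rfl | ⟨q, rfl, hqt⟩
      · simp
      · by_cases hq_eq : q = t
        · subst hq_eq; simp only [xSum_cons, ySum_cons]; omega
        · have := hd q hqt hq_eq; simp only [xSum_cons, ySum_cons]; omega
    · obtain ⟨q, rfl, hqt⟩ := (List.prefix_cons_iff.mp hq).resolve_left hne
      have := hd q hqt (by simpa using hne')
      simp only [xSum_cons, ySum_cons]; omega

theorem isCrossing_cons_iff {h n c : ℕ} {t : List (ℕ × ℕ)} :
    IsCrossing h n ((0, c + 1) :: t) ↔ IsCrossing (h + c + 1) n t := by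
  constructor
  · rintro ⟨hr, hx, hy, hd⟩
    refine ⟨(isRook_cons.mp hr).2, by simpa using hx, by simp only [ySum_cons] at hy; omega,
      fun q hq hne => ?_⟩
    have := hd _ (List.cons_prefix_cons.mpr ⟨rfl, hq⟩) (by simpa using hne)
    simp only [xSum_cons, ySum_cons] at this
    omega
  · rintro ⟨hr, hx, hy, hd⟩
    refine ⟨isRook_cons.mpr ⟨vertical_mem_rookSteps c, hr⟩, by simpa using hx,
      by simp only [ySum_cons]; omega, fun q hq hne => ?_⟩
    rcases List.prefix_cons_iff.mp hq with rfl | ⟨q, rfl, hqt⟩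
    · simp
    · have := hd q hqt (by simpa using hne)
      simp only [xSum_cons, ySum_cons]; omega

theorem isCrossing_concat_iff {h n b : ℕ} {r : List (ℕ × ℕ)} :
    IsCrossing h n (r ++ [(b + 1, 0)]) ↔
      IsRook r ∧ xSum r + b = n ∧ ySum r + h = n ∧ StaysAbove h r := by
  simp only [IsCrossing, isRook_append, xSum_append, ySum_append, xSum_cons, ySum_cons,
    xSum_nil, ySum_nil, StaysAbove]
  constructor
  · rintro ⟨hr, hx, hy, hd⟩
    exact ⟨hr.1, by omega, by omega, fun q hq =>
      hd q (hq.trans (List.prefix_append r _)) fun h => by simpa [h] using hq.length_le⟩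
  · rintro ⟨hr, hx, hy, hd⟩
    refine ⟨⟨hr, by simp [horizontal_mem_rookSteps]⟩, by omega, by omega, fun q hq hne => ?_⟩
    exact hd q ((List.prefix_concat_iff.mp hq).resolve_left hne)

theorem isCatalanPath_concat_iff {n b : ℕ} {r : List (ℕ × ℕ)} :
    IsCatalanPath n (r ++ [(b + 1, 0)]) ↔
      IsRook r ∧ xSum r + (b + 1) = n ∧ ySum r = n ∧ StaysAbove 0 r := by
  simp only [IsCatalanPath, isRook_append, xSum_append, ySum_append, xSum_cons, ySum_cons,
    xSum_nil, ySum_nil, StaysAbove]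
  constructor
  · rintro ⟨hr, hx, hy, hd⟩
    exact ⟨hr.1, by omega, by omega, fun q hq => hd q (hq.trans (List.prefix_append r _))⟩
  · rintro ⟨hr, hx, hy, hd⟩
    refine ⟨⟨hr, by simp [horizontal_mem_rookSteps]⟩, by omega, by omega, fun q hq => ?_⟩
    rcases List.prefix_concat_iff.mp hq with rfl | hq
    · simp only [xSum_append, ySum_append, xSum_cons, ySum_cons, xSum_nil, ySum_nil]; omega
    · exact hd q hq

def extendFirst : Bool → List (ℕ × ℕ) → List (ℕ × ℕ)
  | true, p => (0, 1) :: p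
  | false, p => p.modifyHead fun s => (s.1, s.2 + 1)

def extendLast : Bool → List (ℕ × ℕ) → List (ℕ × ℕ)
  | true, p => p ++ [(1, 0)]
  | false, p => p.modifyLast fun s => (s.1 + 1, s.2)

theorem IsCrossing.isPrimitive_extendFirst {n : ℕ} {M : List (ℕ × ℕ)}
    (hM : IsCrossing 0 (n + 1) M) (e : Bool) : IsPrimitive (n + 2) (extendFirst e M) := by
  cases e with
  | true => exact isPrimitive_cons_iff.mpr hM
  | false =>
    obtain ⟨c, t, rfl⟩ := hM.exists_eq_cons
    rw [isCrossing_cons_iff, zero_add] at hM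
    exact isPrimitive_cons_iff.mpr hM

theorem IsPrimitive.exists_extendFirst {n : ℕ} {α : List (ℕ × ℕ)} (hα : IsPrimitive (n + 2) α) :
    ∃ e, ∃ M, IsCrossing 0 (n + 1) M ∧ extendFirst e M = α := by
  obtain ⟨a, t, rfl⟩ := hα.1.exists_eq_cons hα.2.1
  rw [isPrimitive_cons_iff] at hα
  cases a with
  | zero => exact ⟨true, t, hα, rfl⟩
  | succ c => exact ⟨false, (0, c + 1) :: t, isCrossing_cons_iff.mpr (by rwa [zero_add]), rfl⟩

theorem extendFirst_inj {e e' : Bool} {c c' : ℕ} {t t' : List (ℕ × ℕ)} :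
    extendFirst e ((0, c + 1) :: t) = extendFirst e' ((0, c' + 1) :: t') ↔
      e = e' ∧ (0, c + 1) :: t = (0, c' + 1) :: t' := by
  cases e <;> cases e' <;> simp [extendFirst]

theorem weight_extendFirst (e : Bool) (c : ℕ) (t : List (ℕ × ℕ)) :
    weight (extendFirst e ((0, c + 1) :: t)) = (if e then ν else 1) * weight ((0, c + 1) :: t) := by
  cases e <;> simp [extendFirst, weight_vertical_cons]

theorem IsCatalanPath.isCrossing_extendLast {n : ℕ} {γ : List (ℕ × ℕ)}
    (hγ : IsCatalanPath (n + 1) γ) (f : Bool) : IsCrossing 0 (n + 1) (extendLast f γ) := by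
  cases f with
  | true => exact isCrossing_concat_iff (b := 0).mpr hγ
  | false =>
    obtain ⟨r, b, rfl⟩ := hγ.exists_eq_concat
    obtain ⟨hr, hx, hy, hd⟩ := isCatalanPath_concat_iff.mp hγ
    simpa [extendLast, List.modifyLast_concat] using isCrossing_concat_iff.mpr ⟨hr, hx, hy, hd⟩

theorem IsCrossing.exists_extendLast {n : ℕ} {M : List (ℕ × ℕ)} (hM : IsCrossing 0 (n + 1) M) :
    ∃ f, ∃ γ, IsCatalanPath (n + 1) γ ∧ extendLast f γ = M := by
  obtain ⟨r, b, rfl⟩ := hM.exists_eq_concat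
  obtain ⟨hr, hx, hy, hd⟩ := isCrossing_concat_iff.mp hM
  cases b with
  | zero => exact ⟨true, r, ⟨hr, hx, by simpa using hy, hd⟩, rfl⟩
  | succ b =>
    refine ⟨false, r ++ [(b + 1, 0)], isCatalanPath_concat_iff.mpr ⟨hr, hx, by simpa using hy, hd⟩,
      ?_⟩
    simp [extendLast, List.modifyLast_concat]

theorem extendLast_inj {f f' : Bool} {b b' : ℕ} {r r' : List (ℕ × ℕ)} :
    extendLast f (r ++ [(b + 1, 0)]) = extendLast f' (r' ++ [(b' + 1, 0)]) ↔
      f = f' ∧ r ++ [(b + 1, 0)] = r' ++ [(b' + 1, 0)] := by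
  cases f <;> cases f' <;>
    simp only [extendLast, List.modifyLast_concat, List.append_singleton_inj, Prod.mk.injEq] <;>
    grind

theorem weight_extendLast (f : Bool) (b : ℕ) (r : List (ℕ × ℕ)) :
    weight (extendLast f (r ++ [(b + 1, 0)])) =
      (if f then ρ else 1) * weight (r ++ [(b + 1, 0)]) := by
  cases f
  · simp [extendLast, List.modifyLast_concat, weight_concat_horizontal]
  · rw [extendLast, weight_concat_horizontal le_rfl, if_pos rfl, mul_comm]

theorem sum_primitivePaths_add_two (n : ℕ) :
    ∑ α ∈ primitivePaths (n + 2), weight α = (1 + ν) * ∑ M ∈ crossingPaths (n + 1), weight M := by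
  refine Finset.sum_eq_one_add_mul_sum_of_bool ν extendFirst ?_ ?_ ?_ ?_
  · intro e M hM
    exact mem_primitivePaths.mpr ((mem_crossingPaths.mp hM).isPrimitive_extendFirst e)
  · intro e M e' M' hM hM' h
    obtain ⟨c, t, rfl⟩ := (mem_crossingPaths.mp hM).exists_eq_cons
    obtain ⟨c', t', rfl⟩ := (mem_crossingPaths.mp hM').exists_eq_cons
    exact extendFirst_inj.mp h
  · intro α hα
    obtain ⟨e, M, hM, rfl⟩ := (mem_primitivePaths.mp hα).exists_extendFirst
    exact ⟨e, M, mem_crossingPaths.mpr hM, rfl⟩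
  · intro e M hM
    obtain ⟨c, t, rfl⟩ := (mem_crossingPaths.mp hM).exists_eq_cons
    exact weight_extendFirst e c t

theorem sum_crossingPaths_add_one (n : ℕ) :
    ∑ M ∈ crossingPaths (n + 1), weight M = (1 + ρ) * ∑ γ ∈ catalanPaths (n + 1), weight γ := by
  refine Finset.sum_eq_one_add_mul_sum_of_bool ρ extendLast ?_ ?_ ?_ ?_
  · intro f γ hγ
    exact mem_crossingPaths.mpr ((mem_catalanPaths.mp hγ).isCrossing_extendLast f)
  · intro f γ f' γ' hγ hγ' h
    obtain ⟨r, b, rfl⟩ := (mem_catalanPaths.mp hγ).exists_eq_concat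
    obtain ⟨r', b', rfl⟩ := (mem_catalanPaths.mp hγ').exists_eq_concat
    exact extendLast_inj.mp h
  · intro M hM
    obtain ⟨f, γ, hγ, rfl⟩ := (mem_crossingPaths.mp hM).exists_extendLast
    exact ⟨f, γ, mem_catalanPaths.mpr hγ, rfl⟩
  · intro f γ hγ
    obtain ⟨r, b, rfl⟩ := (mem_catalanPaths.mp hγ).exists_eq_concat
    exact weight_extendLast f b r

theorem primitivePaths_one : primitivePaths 1 = {[(0, 1), (1, 0)]} := by
  ext α
  rw [mem_primitivePaths, Finset.mem_singleton]
  constructor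
  · intro hα
    obtain ⟨a, t, rfl⟩ := hα.1.exists_eq_cons hα.2.1
    have ht := isPrimitive_cons_iff.mp hα
    obtain ⟨r, b, rfl⟩ := ht.exists_eq_concat
    obtain ⟨hr, hx, hy, -⟩ := isCrossing_concat_iff.mp ht
    obtain rfl := hr.eq_nil (by omega) (by omega)
    obtain ⟨rfl, rfl⟩ : a = 0 ∧ b = 0 := by simp only [xSum_nil, ySum_nil] at hx hy; omega
    rfl
  · rintro rfl
    exact isPrimitive_cons_iff.mpr
      (isCrossing_concat_iff (r := []).mpr ⟨isRook_nil, rfl, rfl, staysAbove_nil 0⟩)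

theorem exists_minimal_diagonal_prefix {π : List (ℕ × ℕ)} (hne : π ≠ []) (hd : xSum π = ySum π) :
    ∃ α, α <+: π ∧ α ≠ [] ∧ xSum α = ySum α ∧
      ∀ q, q <+: α → q ≠ [] → q ≠ α → xSum q ≠ ySum q := by
  induction h : π.length using Nat.strong_induction_on generalizing π with
  | _ k ih =>
  by_cases H : ∃ q, q <+: π ∧ q ≠ [] ∧ q ≠ π ∧ xSum q = ySum q
  · obtain ⟨q, hq, hqne, hqπ, hqd⟩ := H
    have hlt : q.length < k :=
      h ▸ lt_of_le_of_ne hq.length_le fun hl => hqπ (hq.eq_of_length hl)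
    obtain ⟨α, hα, rest⟩ := ih _ hlt hqne hqd rfl
    exact ⟨α, hα.trans hq, rest⟩
  · push Not at H
    exact ⟨π, List.prefix_refl π, hne, hd, H⟩

theorem IsCatalanPath.append {k j : ℕ} {α δ : List (ℕ × ℕ)} (hα : IsCatalanPath k α)
    (hδ : IsCatalanPath j δ) : IsCatalanPath (k + j) (α ++ δ) := by
  obtain ⟨hr, hx, hy, hd⟩ := hα
  obtain ⟨hr', hx', hy', hd'⟩ := hδ
  refine ⟨isRook_append.mpr ⟨hr, hr'⟩, by simp [hx, hx'], by simp [hy, hy'], fun q hq => ?_⟩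
  rcases List.prefix_or_prefix_of_prefix hq (List.prefix_append α δ) with hqα | ⟨r, rfl⟩
  · exact hd q hqα
  · have := hd' r ((List.prefix_append_right_inj α).mp hq)
    simp only [xSum_append, ySum_append]
    omega

theorem IsCatalanPath.exists_primitive_append {n : ℕ} {π : List (ℕ × ℕ)}
    (hπ : IsCatalanPath (n + 1) π) :
    ∃ i j α δ, i + j = n ∧ IsPrimitive (i + 1) α ∧ IsCatalanPath j δ ∧ α ++ δ = π := by
  obtain ⟨α, ⟨δ, rfl⟩, hne, hαd, hmin⟩ :=
    exists_minimal_diagonal_prefix hπ.ne_nil (hπ.2.1.trans hπ.2.2.1.symm)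
  obtain ⟨hr, hx, hy, hd⟩ := hπ
  rw [isRook_append] at hr
  have hα : 1 ≤ xSum α := by
    by_contra! h0
    exact hne (hr.1.eq_nil (by omega) (by omega))
  simp only [xSum_append, ySum_append] at hx hy
  refine ⟨xSum α - 1, xSum δ, α, δ, by omega, ⟨⟨hr.1, by omega, by omega, fun q hq => ?_⟩, hne,
    fun q hq hqne hqα => ?_⟩, ⟨hr.2, rfl, by omega, fun q hq => ?_⟩, rfl⟩
  · exact hd q (hq.trans (List.prefix_append α δ))
  · exact lt_of_le_of_ne (hd q (hq.trans (List.prefix_append α δ))) (hmin q hq hqne hqα)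
  · have := hd (α ++ q) ((List.prefix_append_right_inj α).mpr hq)
    simp only [xSum_append, ySum_append] at this
    omega

theorem IsPrimitive.eq_of_append_eq {k k' : ℕ} {α α' δ δ' : List (ℕ × ℕ)} (hα : IsPrimitive k α)
    (hα' : IsPrimitive k' α') (h : α ++ δ = α' ++ δ') : α = α' := by
  have hdiag {k : ℕ} {α : List (ℕ × ℕ)} (hα : IsPrimitive k α) : xSum α = ySum α :=
    hα.1.2.1.trans hα.1.2.2.1.symm
  rcases List.prefix_or_prefix_of_prefix (h ▸ List.prefix_append α δ) (List.prefix_append α' δ')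
    with hαα' | hα'α
  · by_contra hne
    exact (hα'.2.2 α hαα' hα.2.1 hne).ne (hdiag hα)
  · by_contra hne
    exact (hα.2.2 α' hα'α hα'.2.1 (Ne.symm hne)).ne (hdiag hα')

theorem sum_catalanPaths_add_one (n : ℕ) :
    ∑ π ∈ catalanPaths (n + 1), weight π =
      ∑ ij ∈ antidiagonal n,
        (∑ α ∈ primitivePaths (ij.1 + 1), weight α) * ∑ δ ∈ catalanPaths ij.2, weight δ := by
  have hsplit : ∑ x ∈ (antidiagonal n).sigma
        (fun ij => primitivePaths (ij.1 + 1) ×ˢ catalanPaths ij.2), weight (x.2.1 ++ x.2.2) =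
      ∑ π ∈ catalanPaths (n + 1), weight π := by
    refine Finset.sum_nbij (fun x => x.2.1 ++ x.2.2) ?_ ?_ ?_ fun _ _ => rfl
    · rintro ⟨⟨i, j⟩, α, δ⟩ hx
      simp only [mem_sigma, HasAntidiagonal.mem_antidiagonal, mem_product, mem_primitivePaths,
        mem_catalanPaths] at hx ⊢
      rw [← hx.1, add_right_comm]
      exact hx.2.1.1.append hx.2.2
    · rintro ⟨⟨i, j⟩, α, δ⟩ hx ⟨⟨i', j'⟩, α', δ'⟩ hx' h
      simp only [coe_sigma, Set.mem_sigma_iff, mem_coe, HasAntidiagonal.mem_antidiagonal,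
        mem_product, mem_primitivePaths, mem_catalanPaths] at hx hx' h
      obtain rfl := hx.2.1.eq_of_append_eq hx'.2.1 h
      obtain rfl := List.append_cancel_left h
      obtain ⟨rfl, rfl⟩ : i = i' ∧ j = j' := by
        have := hx.2.1.1.2.1.symm.trans hx'.2.1.1.2.1
        omega
      rfl
    · intro π hπ
      obtain ⟨i, j, α, δ, hij, hα, hδ, rfl⟩ := (mem_catalanPaths.mp hπ).exists_primitive_append
      refine ⟨⟨(i, j), α, δ⟩, ?_, rfl⟩
      simp [hij, hα, hδ]
  rw [← hsplit, Finset.sum_sigma]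
  refine Finset.sum_congr rfl fun ij _ => ?_
  rw [Finset.sum_mul_sum, Finset.sum_product]
  simp only [weight_append]

theorem mk_pRookW_eq :
    PowerSeries.mk pRookW = 1 + PowerSeries.X *
      PowerSeries.mk (fun i => ∑ α ∈ primitivePaths (i + 1), weight α) * PowerSeries.mk pRookW :=
  PowerSeries.mk_eq_one_add_X_mul_mk_mul pRookW_zero fun n => by
    simp only [pRookW_eq_sum, sum_catalanPaths_add_one]

theorem mk_sum_primitivePaths :
    PowerSeries.mk (fun i => ∑ α ∈ primitivePaths (i + 1), weight α) =
      PowerSeries.C ((1 + ρ) * (1 + ν)) * PowerSeries.mk pRookW - PowerSeries.C (1 + ρ + ν) := by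
  refine PowerSeries.ext fun n => ?_
  rw [map_sub, PowerSeries.coeff_C_mul, PowerSeries.coeff_C, PowerSeries.coeff_mk,
    PowerSeries.coeff_mk]
  cases n with
  | zero =>
    have : weight [(0, 1), (1, 0)] = ν * ρ := by simp [weight, mul_comm]
    rw [primitivePaths_one, sum_singleton, this, pRookW_zero, if_pos rfl]
    ring
  | succ n =>
    rw [sum_primitivePaths_add_two, sum_crossingPaths_add_one, pRookW_eq_sum,
      if_neg n.succ_ne_zero]
    ring

end RookPath

theorem stmt16 (Pw β : PowerSeries (MvPolynomial (Fin 2) ℚ))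
    (hP : Pw = PowerSeries.mk pRookW)
    (hβ : β = (1 + PowerSeries.C (MvPolynomial.X 0)) * Pw) :
    PowerSeries.C (1 + MvPolynomial.X 1) * PowerSeries.X * β ^ 2 -
      (1 + PowerSeries.C (1 + MvPolynomial.X 0 + MvPolynomial.X 1) * PowerSeries.X) * β +
      PowerSeries.C (1 + MvPolynomial.X 0) = 0 := by
  subst hβ hP
  have h := RookPath.mk_pRookW_eq
  rw [RookPath.mk_sum_primitivePaths] at h
  simp only [map_add, map_one, map_mul] at h ⊢
  linear_combination (-1 - PowerSeries.C (MvPolynomial.X 0)) * h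
end
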